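/- arXiv:1908.10280 — 7 statements merged into one kernel-verified Lean document; each statement's English description precedes it below -/
import Mathlib

section
/- Let μ ∈ ℂ with μ ≠ 0 and let x be a Floquet solution of the delay system with multiplier μ. Define q = (q_1, …, q_N) : [0,1] → (ℂ^d)^N by q_n(s) = x((s + n − 1)Δ) for n = 1, …, N. Then q'(s) = A(s, μ) q(s) for all s ∈ [0,1] and q(1) = B(μ) q(0); in particular, the vector v = (v_1, …, v_N) with v_n = x((n − 1)Δ) satisfies N(μ)v = 0, i.e., every solution q of q'(s) = A(s, μ)q(s) on [0,1] with q(0) = v satisfies q(1) = B(μ)v. (Forward direction of Theorem 2.2: an eigenpair of the monodromy operator yields an eigenpair of the finite-dimensional nonlinear eigenvalue problem.) -/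
/-!
Cut `x` into the `N` windows of one period, `q_n(s) = x((s + n - 1)Δ)`. A delayed value
`x((s + n - 1)Δ - n_jΔ)` lies in window `b_{n-n_j}` shifted by `a_{n-n_j}` periods, and the
Floquet relation `x(t + T) = μ x(t)` turns it into `μ^{a_{n-n_j}} q_{b_{n-n_j}}(s)`; hence
`q' = A(s, μ) q`. Consecutive windows abut and the last one wraps around with the factor `μ`,
which is `q(1) = B(μ) q(0)`. Finally `A(s, μ)` is linear in `q` and continuous in `s`, so it is
uniformly Lipschitz on `[0, 1]` and Grönwall's uniqueness theorem identifies every solution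
`Q` with `Q(0) = q(0)` with `q`.
-/

open scoped BigOperators

noncomputable section

/-- `aExp N k = ⌊(k-1)/N⌋` (floor division). -/
def aExp (N : ℕ) (k : ℤ) : ℤ := Int.fdiv (k - 1) (N : ℤ)

/-- `bIdx N hN k` is the `Fin N` index (zero-based) corresponding to the
paper index `b_k = ((k-1) mod N) + 1 ∈ {1,…,N}`. -/
def bIdx (N : ℕ) (hN : 0 < N) (k : ℤ) : Fin N :=
  ⟨((k - 1) % (N : ℤ)).toNat, by
    have hN' : (0:ℤ) < (N:ℤ) := by exact_mod_cast hN
    have h1 : 0 ≤ (k - 1) % (N : ℤ) := Int.emod_nonneg _ (ne_of_gt hN')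
    have h2 : (k - 1) % (N : ℤ) < (N : ℤ) := Int.emod_lt_of_pos _ hN'
    omega⟩

/-- The block linear map `A(s,μ)` acting on `(ℂ^d)^N`:
`(A(s,μ)q)_n = Δ Σ_j A_j((s+n-1)Δ) μ^{a_{n-n_j}} q_{b_{n-n_j}}` (paper indices `n = 1,…,N`). -/
def Aop (d h N : ℕ) (hN : 0 < N) (Δ : ℝ)
    (A : Fin (h+1) → ℝ → Matrix (Fin d) (Fin d) ℝ) (nn : Fin (h+1) → ℕ)
    (s : ℝ) (μ : ℂ) (q : Fin N → Fin d → ℂ) : Fin N → Fin d → ℂ :=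
  fun n i => (Δ : ℂ) * ∑ j : Fin (h+1),
    μ ^ aExp N (((n : ℕ) : ℤ) + 1 - (nn j : ℤ)) *
      ∑ i' : Fin d, ((A j ((s + ((n : ℕ) : ℝ)) * Δ)) i i' : ℂ) *
        q (bIdx N hN (((n : ℕ) : ℤ) + 1 - (nn j : ℤ))) i'

/-- The linear map `B(μ)` on `(ℂ^d)^N`:
`(B(μ)q)_n = q_{n+1}` for `n = 1,…,N-1` and `(B(μ)q)_N = μ q_1`. -/
def Bop (d N : ℕ) (hN : 0 < N) (μ : ℂ) (q : Fin N → Fin d → ℂ) : Fin N → Fin d → ℂ :=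
  fun n i => if hn : (n : ℕ) + 1 < N then q ⟨(n : ℕ) + 1, hn⟩ i else μ * q ⟨0, hN⟩ i
/-- A Floquet solution of `x'(t) = Σ_j A_j(t) x(t - n_j Δ)` with multiplier `μ`:
a not-identically-zero differentiable `x : ℝ → ℂ^d` satisfying the delay equation
everywhere together with `x(t+T) = μ x(t)`. -/
def IsFloquetSolution (d h : ℕ) (A : Fin (h+1) → ℝ → Matrix (Fin d) (Fin d) ℝ)
    (nn : Fin (h+1) → ℕ) (Δ T : ℝ) (μ : ℂ) (x : ℝ → Fin d → ℂ) : Prop :=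
  (∃ t, x t ≠ 0) ∧
  (∀ t : ℝ, HasDerivAt x (fun i => ∑ j : Fin (h+1), ∑ i' : Fin d,
      ((A j t) i i' : ℂ) * x (t - (nn j : ℝ) * Δ) i') t) ∧
  (∀ t : ℝ, x (t + T) = fun i => μ * x t i)

theorem zpow_smul_of_forall_add_eq_smul {𝕜 E : Type*} [DivisionRing 𝕜] [AddCommGroup E]
    [Module 𝕜 E] {x : ℝ → E} {T : ℝ} {μ : 𝕜} (hμ : μ ≠ 0) (hx : ∀ t, x (t + T) = μ • x t)
    (m : ℤ) (t : ℝ) : x (t + m * T) = μ ^ m • x t := by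
  induction m using Int.induction_on with
  | zero => simp
  | succ m ih =>
    rw [show t + ((m + 1 : ℤ) : ℝ) * T = t + (m : ℤ) * T + T by push_cast; ring, hx, ih,
      smul_smul, ← zpow_one_add₀ hμ, add_comm]
  | pred m ih =>
    have hstep := hx (t + ((-m - 1 : ℤ) : ℝ) * T)
    rw [show t + ((-m - 1 : ℤ) : ℝ) * T + T = t + ((-m : ℤ) : ℝ) * T by push_cast; ring, ih,
      eq_comm, ← eq_inv_smul_iff₀ hμ, smul_smul] at hstep
    rw [hstep, sub_eq_neg_add, zpow_add₀ hμ, zpow_neg_one]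

theorem sub_one_eq_mul_aExp_add_bIdx (N : ℕ) (hN : 0 < N) (m : ℤ) :
    m - 1 = N * aExp N m + (bIdx N hN m : ℕ) := by
  have hmod : 0 ≤ (m - 1) % (N : ℤ) := Int.emod_nonneg _ (by omega)
  simp only [aExp, bIdx, Int.fdiv_eq_ediv_of_nonneg _ (Int.natCast_nonneg N),
    Int.toNat_of_nonneg hmod, Int.mul_ediv_add_emod]

theorem apply_add_sub_one_mul_eq_zpow_aExp_smul {𝕜 E : Type*} [DivisionRing 𝕜] [AddCommGroup E]
    [Module 𝕜 E] {N : ℕ} (hN : 0 < N) {Δ : ℝ} {μ : 𝕜} (hμ : μ ≠ 0) {x : ℝ → E}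
    (hx : ∀ t, x (t + N * Δ) = μ • x t) (m : ℤ) (t : ℝ) :
    x (t + (m - 1) * Δ) = μ ^ aExp N m • x (t + (bIdx N hN m : ℕ) * Δ) := by
  have hm : ((m : ℝ) - 1) = N * aExp N m + (bIdx N hN m : ℕ) := by
    exact_mod_cast sub_one_eq_mul_aExp_add_bIdx N hN m
  rw [← zpow_smul_of_forall_add_eq_smul hμ hx, hm]
  ring_nf

theorem linear_ODE_solution_unique_of_mem_Icc_right {𝕜 E : Type*} [NontriviallyNormedField 𝕜]
    [NormedAddCommGroup E] [NormedSpace 𝕜 E] [NormedSpace ℝ E] {L : ℝ → E →L[𝕜] E}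
    {f g : ℝ → E} {a b : ℝ} (hL : ContinuousOn L (Set.Icc a b))
    (hf : ContinuousOn f (Set.Icc a b))
    (hf' : ∀ t ∈ Set.Ico a b, HasDerivWithinAt f (L t (f t)) (Set.Ici t) t)
    (hg : ContinuousOn g (Set.Icc a b))
    (hg' : ∀ t ∈ Set.Ico a b, HasDerivWithinAt g (L t (g t)) (Set.Ici t) t)
    (ha : f a = g a) : Set.EqOn f g (Set.Icc a b) := by
  obtain ⟨C, hC⟩ := isCompact_Icc.exists_bound_of_continuousOn hL
  have hlip : ∀ t ∈ Set.Ico a b, LipschitzOnWith C.toNNReal (L t) Set.univ := fun t ht =>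
    ((L t).lipschitz.weaken (norm_toNNReal (a := L t) ▸ Real.toNNReal_le_toNNReal
      (hC t (Set.Ico_subset_Icc_self ht)))).lipschitzOnWith
  exact ODE_solution_unique_of_mem_Icc_right hlip hf hf' (fun _ _ => trivial) hg hg'
    (fun _ _ => trivial) ha

def AopCLM (d h N : ℕ) (hN : 0 < N) (Δ : ℝ) (A : Fin (h+1) → ℝ → Matrix (Fin d) (Fin d) ℝ)
    (nn : Fin (h+1) → ℕ) (s : ℝ) (μ : ℂ) : (Fin N → Fin d → ℂ) →L[ℂ] (Fin N → Fin d → ℂ) :=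
  LinearMap.toContinuousLinearMap
    { toFun := Aop d h N hN Δ A nn s μ
      map_add' := fun p q => by
        ext n i
        simp only [Aop, Pi.add_apply, mul_add, Finset.sum_add_distrib]
      map_smul' := fun c q => by
        ext n i
        simp only [Aop, Pi.smul_apply, smul_eq_mul, Finset.mul_sum, RingHom.id_apply]
        exact Finset.sum_congr rfl fun _ _ => Finset.sum_congr rfl fun _ _ => by ring }

section BlockSystem

variable {d h N : ℕ} {hN : 0 < N} {Δ : ℝ} {A : Fin (h+1) → ℝ → Matrix (Fin d) (Fin d) ℝ}
  {nn : Fin (h+1) → ℕ}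

theorem AopCLM_apply (s : ℝ) (μ : ℂ) (q : Fin N → Fin d → ℂ) :
    AopCLM d h N hN Δ A nn s μ q = Aop d h N hN Δ A nn s μ q := rfl

theorem continuous_AopCLM (hA : ∀ j, Continuous (A j)) (μ : ℂ) :
    Continuous fun s => AopCLM d h N hN Δ A nn s μ := by
  refine continuous_clm_apply.mpr fun q => continuous_pi fun n => continuous_pi fun i => ?_
  simp only [AopCLM_apply, Aop]
  fun_prop

-- Blocks are indexed from zero: block `n` is the paper's `q_{n+1}`.
def floquetBlocks (N : ℕ) (Δ : ℝ) (x : ℝ → Fin d → ℂ) (s : ℝ) : Fin N → Fin d → ℂ :=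
  fun n i => x ((s + (n : ℕ)) * Δ) i

theorem floquetBlocks_one {μ : ℂ} {x : ℝ → Fin d → ℂ}
    (hx : IsFloquetSolution d h A nn Δ (N * Δ) μ x) :
    floquetBlocks N Δ x 1 = Bop d N hN μ (floquetBlocks N Δ x 0) := by
  ext n i
  simp only [floquetBlocks, Bop]
  split_ifs with hn
  · push_cast
    ring_nf
  · have hnN : ((n : ℕ) : ℝ) + 1 = N := by exact_mod_cast (by omega : (n : ℕ) + 1 = N)
    rw [add_comm, hnN, ← zero_add ((N : ℝ) * Δ), hx.2.2]
    simp

theorem hasDerivAt_floquetBlocks {μ : ℂ} (hμ : μ ≠ 0) {x : ℝ → Fin d → ℂ}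
    (hx : IsFloquetSolution d h A nn Δ (N * Δ) μ x) (s : ℝ) :
    HasDerivAt (floquetBlocks N Δ x) (Aop d h N hN Δ A nn s μ (floquetBlocks N Δ x s)) s := by
  refine hasDerivAt_pi.mpr fun n => hasDerivAt_pi.mpr fun i => ?_
  have hlin : HasDerivAt (fun s : ℝ => (s + (n : ℕ)) * Δ) Δ s := by
    simpa using ((hasDerivAt_id s).add_const ((n : ℕ) : ℝ)).mul_const Δ
  refine ((hasDerivAt_pi.mp (hx.2.1 ((s + (n : ℕ)) * Δ)) i).scomp s hlin).congr_deriv ?_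
  simp only [Aop, floquetBlocks, Complex.real_smul, Finset.mul_sum]
  refine Finset.sum_congr rfl fun j _ => Finset.sum_congr rfl fun i' _ => ?_
  have hshift := congrFun (apply_add_sub_one_mul_eq_zpow_aExp_smul hN hμ hx.2.2
    ((n : ℕ) + 1 - nn j) (s * Δ)) i'
  simp only [Pi.smul_apply, smul_eq_mul] at hshift
  rw [show (s + (n : ℕ)) * Δ - (nn j : ℝ) * Δ = s * Δ + ((((n : ℕ) + 1 - nn j : ℤ) : ℝ) - 1) * Δ by
    push_cast; ring, hshift, ← add_mul]
  ring

end BlockSystem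

theorem eigenpair_to_nleig_general
    (d h N : ℕ) (hN : 0 < N) (Δ : ℝ)
    (A : Fin (h+1) → ℝ → Matrix (Fin d) (Fin d) ℝ)
    (hA : ∀ j, Continuous (A j))
    (nn : Fin (h+1) → ℕ)
    (μ : ℂ) (hμ : μ ≠ 0)
    (x : ℝ → Fin d → ℂ)
    (hx : IsFloquetSolution d h A nn Δ ((N : ℝ) * Δ) μ x) :
    (∀ s ∈ Set.Icc (0:ℝ) 1,
      HasDerivAt (fun s : ℝ => fun (n : Fin N) (i : Fin d) => x ((s + ((n : ℕ) : ℝ)) * Δ) i)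
        (Aop d h N hN Δ A nn s μ (fun n i => x ((s + ((n : ℕ) : ℝ)) * Δ) i)) s) ∧
    ((fun (n : Fin N) (i : Fin d) => x ((1 + ((n : ℕ) : ℝ)) * Δ) i)
      = Bop d N hN μ (fun n i => x ((((n : ℕ) : ℝ)) * Δ) i)) ∧
    (∀ Q : ℝ → Fin N → Fin d → ℂ,
      Q 0 = (fun (n : Fin N) (i : Fin d) => x ((((n : ℕ) : ℝ)) * Δ) i) →
      (∀ s ∈ Set.Icc (0:ℝ) 1, HasDerivAt Q (Aop d h N hN Δ A nn s μ (Q s)) s) →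
      Q 1 = Bop d N hN μ (fun (n : Fin N) (i : Fin d) => x ((((n : ℕ) : ℝ)) * Δ) i)) := by
  have hq' := hasDerivAt_floquetBlocks (hN := hN) hμ hx
  have hq0 : floquetBlocks N Δ x 0 = fun (n : Fin N) i => x (((n : ℕ) : ℝ) * Δ) i := by
    ext n i
    simp only [floquetBlocks, zero_add]
  refine ⟨fun s _ => hq' s, hq0 ▸ floquetBlocks_one hx, fun Q hQ0 hQ' => ?_⟩
  have hQq : Set.EqOn Q (floquetBlocks N Δ x) (Set.Icc 0 1) :=
    linear_ODE_solution_unique_of_mem_Icc_right (continuous_AopCLM hA μ).continuousOn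
      (fun t ht => (hQ' t ht).continuousAt.continuousWithinAt)
      (fun t ht => (hQ' t (Set.Ico_subset_Icc_self ht)).hasDerivWithinAt)
      (fun t _ => (hq' t).continuousAt.continuousWithinAt)
      (fun t _ => (hq' t).hasDerivWithinAt) (hQ0.trans hq0.symm)
  exact (hQq (Set.right_mem_Icc.mpr zero_le_one)).trans (hq0 ▸ floquetBlocks_one hx)

/-- **Theorem 2.2, forward direction.** If `x` is a Floquet solution with multiplier
`μ ≠ 0`, then `q_n(s) = x((s+n-1)Δ)` solves `q' = A(s,μ)q` on `[0,1]` with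
`q(1) = B(μ) q(0)`; in particular `v_n = x((n-1)Δ)` satisfies `N(μ)v = 0`, i.e. every
solution `Q` of the initial value problem `Q' = A(s,μ)Q`, `Q(0) = v` satisfies
`Q(1) = B(μ)v`. -/
theorem eigenpair_to_nleig
    (d h N : ℕ) (hd : 0 < d) (hN : 0 < N) (Δ : ℝ) (hΔ : 0 < Δ)
    (A : Fin (h+1) → ℝ → Matrix (Fin d) (Fin d) ℝ)
    (hA : ∀ j, Continuous (A j))
    (hper : ∀ j t, A j (t + (N : ℝ) * Δ) = A j t)
    (nn : Fin (h+1) → ℕ) (hn0 : nn 0 = 0)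
    (hmono : ∀ i j : Fin (h+1), 1 ≤ (i : ℕ) → i < j → nn i < nn j)
    (μ : ℂ) (hμ : μ ≠ 0)
    (x : ℝ → Fin d → ℂ)
    (hx : IsFloquetSolution d h A nn Δ ((N : ℝ) * Δ) μ x) :
    (∀ s ∈ Set.Icc (0:ℝ) 1,
      HasDerivAt (fun s : ℝ => fun (n : Fin N) (i : Fin d) => x ((s + ((n : ℕ) : ℝ)) * Δ) i)
        (Aop d h N hN Δ A nn s μ (fun n i => x ((s + ((n : ℕ) : ℝ)) * Δ) i)) s) ∧
    ((fun (n : Fin N) (i : Fin d) => x ((1 + ((n : ℕ) : ℝ)) * Δ) i)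
      = Bop d N hN μ (fun n i => x ((((n : ℕ) : ℝ)) * Δ) i)) ∧
    (∀ Q : ℝ → Fin N → Fin d → ℂ,
      Q 0 = (fun (n : Fin N) (i : Fin d) => x ((((n : ℕ) : ℝ)) * Δ) i) →
      (∀ s ∈ Set.Icc (0:ℝ) 1, HasDerivAt Q (Aop d h N hN Δ A nn s μ (Q s)) s) →
      Q 1 = Bop d N hN μ (fun (n : Fin N) (i : Fin d) => x ((((n : ℕ) : ℝ)) * Δ) i)) :=
  eigenpair_to_nleig_general d h N hN Δ A hA nn μ hμ x hx
end
end

section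
/- Let μ ∈ ℂ with μ ≠ 0 and let q = (q_1, …, q_N) : [0,1] → (ℂ^d)^N be differentiable with q'(s) = A(s, μ) q(s) for all s ∈ [0,1], q(1) = B(μ) q(0), and q(0) ≠ 0. Define x : ℝ → ℂ^d by x(t) = μ^{⌊(n−1)/N⌋} q_{((n−1) mod N) + 1}(t/Δ − (n − 1)) for t ∈ ((n − 1)Δ, nΔ] and every n ∈ ℤ (μ raised to a possibly negative integer power). Then x is a Floquet solution of the delay system with multiplier μ; in particular μ is a Floquet multiplier. (Backward direction of Lemma 2.1 / Theorem 2.2: a solution of the boundary value problem yields an eigenfunction of the monodromy operator.) -/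
open scoped BigOperators

noncomputable section

/-! On the interval `((k-1)Δ, kΔ]` the function `x` is the rescaled block `μ^{a_k} q_{b_k}`.
Reading the delayed values `x(t - n_j Δ)` off the blocks `k - n_j` (and using the `T`-periodicity
of the `A_j` to move the time argument back into the first period), row `b_k` of the block system
`q' = A(s, μ) q` becomes the delay equation for `x` on that interval. The boundary condition
`q(1) = B(μ) q(0)` says that consecutive blocks agree at the junctions `kΔ`, hence so do the
right-hand sides of the delay equation, so the one-sided derivatives of `x` match there.
Shifting by `N` blocks multiplies by `μ`, which is `x(t + T) = μ x(t)`, and `x` does not vanish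
because its values at the junctions are the entries of `q(0)`. -/

section Index

variable {N : ℕ}

lemma aExp_eq_ediv (k : ℤ) : aExp N k = (k - 1) / N :=
  Int.fdiv_eq_ediv_of_nonneg _ (Int.natCast_nonneg N)

lemma bIdx_val (hN : 0 < N) (k : ℤ) : ((bIdx N hN k : ℕ) : ℤ) = (k - 1) % N :=
  Int.toNat_of_nonneg (Int.emod_nonneg _ (by omega))

lemma aExp_add_mul (hN : 0 < N) (j a : ℤ) : aExp N (j + N * a) = aExp N j + a := by
  rw [aExp_eq_ediv, aExp_eq_ediv, add_sub_right_comm, Int.add_mul_ediv_left _ _ (by omega)]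

lemma bIdx_add_mul (hN : 0 < N) (j a : ℤ) : bIdx N hN (j + N * a) = bIdx N hN j := by
  ext
  rw [← Nat.cast_inj (R := ℤ), bIdx_val, bIdx_val, add_sub_right_comm, Int.add_mul_emod_self_left]

lemma aExp_natCast_add_one (n : Fin N) : aExp N ((n : ℕ) + 1) = 0 := by
  rw [aExp_eq_ediv, add_sub_cancel_right]
  exact Int.ediv_eq_zero_of_lt (by omega) (by omega)

lemma bIdx_natCast_add_one (hN : 0 < N) (n : Fin N) : bIdx N hN ((n : ℕ) + 1) = n := by
  ext
  rw [← Nat.cast_inj (R := ℤ), bIdx_val, add_sub_cancel_right]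
  exact Int.emod_eq_of_lt (by omega) (by omega)

lemma exists_eq_natCast_add_one_add_mul (hN : 0 < N) (k : ℤ) :
    ∃ (n : Fin N) (a : ℤ), k = (n : ℕ) + 1 + N * a :=
  ⟨bIdx N hN k, aExp N k, by
    rw [bIdx_val, aExp_eq_ediv]
    have := Int.mul_ediv_add_emod (k - 1) N
    omega⟩

end Index

section FloquetExt

variable {K M : Type*} [DivisionRing K] [AddCommGroup M] [Module K M] {N : ℕ} (hN : 0 < N)

/-- The `μ`-quasiperiodic extension `k ↦ μ^{a_k} v_{b_k}` of one period `v = (v_1, …, v_N)`. -/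
def floquetExt (μ : K) (v : Fin N → M) (k : ℤ) : M := μ ^ aExp N k • v (bIdx N hN k)

variable {μ : K}

lemma floquetExt_add_mul (hμ : μ ≠ 0) (v : Fin N → M) (j a : ℤ) :
    floquetExt hN μ v (j + N * a) = μ ^ a • floquetExt hN μ v j := by
  rw [floquetExt, floquetExt, aExp_add_mul hN, bIdx_add_mul, add_comm, zpow_add₀ hμ, mul_smul]

lemma floquetExt_natCast_add_one (v : Fin N → M) (n : Fin N) :
    floquetExt hN μ v ((n : ℕ) + 1) = v n := by
  rw [floquetExt, aExp_natCast_add_one, bIdx_natCast_add_one, zpow_zero, one_smul]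

end FloquetExt

section BlockOperators

variable {d N : ℕ} (hN : 0 < N) {μ : ℂ}

lemma Bop_eq_floquetExt (hμ : μ ≠ 0) (v : Fin N → Fin d → ℂ) (n : Fin N) :
    Bop d N hN μ v n = floquetExt hN μ v ((n : ℕ) + 1 + 1) := by
  by_cases hn : (n : ℕ) + 1 < N
  · have : ((n : ℕ) : ℤ) + 1 + 1 = (((⟨(n : ℕ) + 1, hn⟩ : Fin N) : ℕ) : ℤ) + 1 := by push_cast; ring
    rw [this, floquetExt_natCast_add_one]
    exact funext fun i => dif_pos hn
  · have : ((n : ℕ) : ℤ) + 1 + 1 = ((⟨0, hN⟩ : Fin N) : ℕ) + 1 + N * 1 := by push_cast; omega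
    rw [this, floquetExt_add_mul hN hμ, floquetExt_natCast_add_one, zpow_one]
    exact funext fun i => dif_neg hn

lemma floquetExt_Bop (hμ : μ ≠ 0) (v : Fin N → Fin d → ℂ) (k : ℤ) :
    floquetExt hN μ (Bop d N hN μ v) k = floquetExt hN μ v (k + 1) := by
  obtain ⟨n, a, rfl⟩ := exists_eq_natCast_add_one_add_mul hN k
  rw [floquetExt_add_mul hN hμ, floquetExt_natCast_add_one, Bop_eq_floquetExt hN hμ,
    show ((n : ℕ) : ℤ) + 1 + N * a + 1 = (n : ℕ) + 1 + 1 + N * a by ring, floquetExt_add_mul hN hμ]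

variable {h : ℕ} {Δ : ℝ} {A : Fin (h+1) → ℝ → Matrix (Fin d) (Fin d) ℝ} {nn : Fin (h+1) → ℕ}

lemma Aop_apply (s : ℝ) (v : Fin N → Fin d → ℂ) (n : Fin N) (i : Fin d) :
    Aop d h N hN Δ A nn s μ v n i = Δ * ∑ j, ∑ i', (A j ((s + (n : ℕ)) * Δ) i i' : ℂ) *
      floquetExt hN μ v ((n : ℕ) + 1 - nn j) i' := by
  simp only [Aop, floquetExt, Pi.smul_apply, smul_eq_mul]
  refine congrArg _ (Finset.sum_congr rfl fun j _ => ?_)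
  rw [Finset.mul_sum]
  exact Finset.sum_congr rfl fun i' _ => by ring

lemma floquetExt_Aop (hΔ : Δ ≠ 0) (hper : ∀ j t, A j (t + (N : ℝ) * Δ) = A j t) (hμ : μ ≠ 0)
    (s : ℝ) (v : Fin N → Fin d → ℂ) (k : ℤ) :
    ((Δ⁻¹ : ℝ) : ℂ) • floquetExt hN μ (Aop d h N hN Δ A nn s μ v) k = fun i =>
      ∑ j, ∑ i', (A j ((s + k - 1) * Δ) i i' : ℂ) * floquetExt hN μ v (k - nn j) i' := by
  obtain ⟨n, a, rfl⟩ := exists_eq_natCast_add_one_add_mul hN k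
  rw [floquetExt_add_mul hN hμ, floquetExt_natCast_add_one]
  funext i
  have hA : ∀ j, A j ((s + (((n : ℕ) + 1 + N * a : ℤ) : ℝ) - 1) * Δ) = A j ((s + (n : ℕ)) * Δ) :=
    fun j => by
      rw [← (Function.Periodic.int_mul (hper j) a) ((s + (n : ℕ)) * Δ)]
      push_cast; ring_nf
  have hv : ∀ j, floquetExt hN μ v ((n : ℕ) + 1 + N * a - nn j) =
      μ ^ a • floquetExt hN μ v ((n : ℕ) + 1 - nn j) :=
    fun j => by rw [← floquetExt_add_mul hN hμ]; ring_nf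
  simp only [Pi.smul_apply, smul_eq_mul, Aop_apply, hA, hv, Finset.mul_sum]
  refine Finset.sum_congr rfl fun j _ => Finset.sum_congr rfl fun i' _ => ?_
  have : (Δ : ℂ) ≠ 0 := mod_cast hΔ
  push_cast
  field_simp

end BlockOperators

section Gluing

open Filter Set

variable {E : Type*} [NormedAddCommGroup E] [NormedSpace ℝ E] {Δ : ℝ}

lemma ceil_div_eq_iff (hΔ : 0 < Δ) {t : ℝ} {k : ℤ} :
    ⌈t / Δ⌉ = k ↔ (k - 1) * Δ < t ∧ t ≤ k * Δ := by
  rw [Int.ceil_eq_iff, lt_div_iff₀ hΔ, div_le_iff₀ hΔ]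

lemma hasDerivAt_ceil_piecewise (hΔ : 0 < Δ) {f f' : ℤ → ℝ → E}
    (hf : ∀ (k : ℤ) t, (k - 1) * Δ ≤ t → t ≤ k * Δ → HasDerivAt (f k) (f' k t) t)
    (hglue : ∀ k : ℤ, f (k + 1) (k * Δ) = f k (k * Δ))
    (hglue' : ∀ k : ℤ, f' (k + 1) (k * Δ) = f' k (k * Δ)) (t : ℝ) :
    HasDerivAt (fun t => f ⌈t / Δ⌉ t) (f' ⌈t / Δ⌉ t) t := by
  obtain ⟨k, hk⟩ : ∃ k, ⌈t / Δ⌉ = k := ⟨_, rfl⟩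
  rw [hk]
  obtain ⟨hlo, hhi⟩ := (ceil_div_eq_iff hΔ).mp hk
  have hpiece : ∀ u ∈ Ioc ((k - 1) * Δ) (k * Δ), f ⌈u / Δ⌉ u = f k u :=
    fun u hu => by rw [(ceil_div_eq_iff hΔ).mpr hu]
  rcases hhi.lt_or_eq with hlt | rfl
  · exact (hf k t hlo.le hhi).congr_of_eventuallyEq <|
      mem_of_superset (Ioo_mem_nhds hlo hlt) fun u hu => hpiece u (Ioo_subset_Ioc_self hu)
  have hl : HasDerivWithinAt (fun t => f ⌈t / Δ⌉ t) (f' k (k * Δ)) (Iic (k * Δ)) (k * Δ) :=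
    (hf k _ hlo.le le_rfl).hasDerivWithinAt.congr_of_eventuallyEq
      (mem_of_superset (Ioc_mem_nhdsLE hlo) hpiece) (hpiece _ ⟨hlo, le_rfl⟩)
  have hnext : ∀ u ∈ Ico (k * Δ) ((k + 1 : ℤ) * Δ), f ⌈u / Δ⌉ u = f (k + 1) u := by
    rintro u ⟨hku, hu⟩
    rcases hku.lt_or_eq with hku | rfl
    · rw [(ceil_div_eq_iff hΔ).mpr ⟨by push_cast; linarith, hu.le⟩]
    · rw [hpiece _ ⟨hlo, le_rfl⟩, hglue]
  have hr : HasDerivWithinAt (fun t => f ⌈t / Δ⌉ t) (f' k (k * Δ)) (Ici (k * Δ)) (k * Δ) := by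
    rw [← hglue']
    refine (hf (k + 1) _ (by push_cast; linarith) (by push_cast; linarith)).hasDerivWithinAt
      |>.congr_of_eventuallyEq (mem_of_superset (Ico_mem_nhdsGE ?_) hnext) (hnext _ ⟨le_rfl, ?_⟩)
    all_goals push_cast; linarith
  simpa only [Iic_union_Ici, hasDerivWithinAt_univ] using hl.union hr

end Gluing

lemma hasDerivAt_floquetExt {M : Type*} [NormedAddCommGroup M] [NormedSpace ℂ M] {N : ℕ}
    (hN : 0 < N) {q : ℝ → Fin N → M} {q' : Fin N → M} {s : ℝ} (hq : HasDerivAt q q' s)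
    (μ : ℂ) (k : ℤ) :
    HasDerivAt (fun s => floquetExt hN μ (q s) k) (floquetExt hN μ q' k) s :=
  (hasDerivAt_pi.mp hq _).const_smul _

section Piece

variable {d N : ℕ} (hN : 0 < N) {Δ : ℝ} {μ : ℂ} (q : ℝ → Fin N → Fin d → ℂ)

/-- The candidate Floquet solution on `((k-1)Δ, kΔ]`, extended to all times. -/
def floquetPiece (Δ : ℝ) (μ : ℂ) (k : ℤ) (t : ℝ) : Fin d → ℂ :=
  floquetExt hN μ (q (t / Δ - (k - 1))) k

lemma floquetPiece_eq_of_sub_mul_eq (hΔ : Δ ≠ 0) {k k' : ℤ} {t t' : ℝ}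
    (h : t' - k' * Δ = t - k * Δ) :
    floquetPiece hN q Δ μ k' t' = floquetExt hN μ (q (t / Δ - (k - 1))) k' := by
  rw [floquetPiece, show t' / Δ - (k' - 1) = t / Δ - (k - 1) by field_simp; linarith]

lemma floquetPiece_succ (hΔ : Δ ≠ 0) (hμ : μ ≠ 0) (hbc : q 1 = Bop d N hN μ (q 0)) (k : ℤ) :
    floquetPiece hN q Δ μ (k + 1) (k * Δ) = floquetPiece hN q Δ μ k (k * Δ) := by
  simp only [floquetPiece, mul_div_cancel_right₀ _ hΔ]
  push_cast
  rw [sub_sub_cancel, show (k : ℝ) - (k + 1 - 1) = 0 by ring, ← floquetExt_Bop hN hμ, ← hbc]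

lemma hasDerivAt_floquetPiece {h : ℕ} {A : Fin (h+1) → ℝ → Matrix (Fin d) (Fin d) ℝ}
    {nn : Fin (h+1) → ℕ} (hΔ : 0 < Δ) (hper : ∀ j t, A j (t + (N : ℝ) * Δ) = A j t) (hμ : μ ≠ 0)
    (hode : ∀ s ∈ Set.Icc (0:ℝ) 1, HasDerivAt q (Aop d h N hN Δ A nn s μ (q s)) s)
    (k : ℤ) (t : ℝ) (hlo : (k - 1) * Δ ≤ t) (hhi : t ≤ k * Δ) :
    HasDerivAt (floquetPiece hN q Δ μ k) (fun i => ∑ j, ∑ i', (A j t i i' : ℂ) *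
      floquetPiece hN q Δ μ (k - nn j) (t - nn j * Δ) i') t := by
  set s := t / Δ - (k - 1) with hs
  have hsI : s ∈ Set.Icc (0:ℝ) 1 := by
    rw [show s = (t - (k - 1) * Δ) / Δ by rw [hs]; field_simp]
    exact ⟨div_nonneg (by linarith) hΔ.le, (div_le_one hΔ).mpr (by linarith)⟩
  have hlin : HasDerivAt (fun t => t / Δ - (k - 1)) Δ⁻¹ t := by
    simpa only [one_div] using ((hasDerivAt_id' t).div_const Δ).sub_const ((k : ℝ) - 1)
  refine ((hasDerivAt_floquetExt hN (hode s hsI) μ k).scomp t hlin).congr_deriv ?_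
  have ht : (s + k - 1) * Δ = t := by rw [hs]; field_simp; ring
  rw [← Complex.coe_smul, floquetExt_Aop hN hΔ.ne' hper hμ, ht]
  funext i
  refine Finset.sum_congr rfl fun j _ => Finset.sum_congr rfl fun i' _ => ?_
  rw [floquetPiece_eq_of_sub_mul_eq hN q hΔ.ne' (k := k) (by push_cast; ring)]

def floquetSolution (Δ : ℝ) (μ : ℂ) (t : ℝ) : Fin d → ℂ := floquetPiece hN q Δ μ ⌈t / Δ⌉ t

lemma floquetSolution_sub_natCast_mul (hΔ : Δ ≠ 0) (t : ℝ) (m : ℕ) :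
    floquetSolution hN q Δ μ (t - m * Δ) = floquetPiece hN q Δ μ (⌈t / Δ⌉ - m) (t - m * Δ) := by
  rw [floquetSolution, sub_div, mul_div_cancel_right₀ _ hΔ, Int.ceil_sub_natCast]

lemma floquetSolution_add_period (hΔ : Δ ≠ 0) (hμ : μ ≠ 0) (t : ℝ) :
    floquetSolution hN q Δ μ (t + N * Δ) = μ • floquetSolution hN q Δ μ t := by
  rw [floquetSolution, add_div, mul_div_cancel_right₀ _ hΔ, Int.ceil_add_natCast,
    floquetPiece_eq_of_sub_mul_eq hN q hΔ (k := ⌈t / Δ⌉) (t := t) (by push_cast; ring),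
    ← mul_one (N : ℤ), floquetExt_add_mul hN hμ, zpow_one]
  rfl

lemma floquetSolution_intCast_mul (hΔ : Δ ≠ 0) (hμ : μ ≠ 0) (hbc : q 1 = Bop d N hN μ (q 0))
    (k : ℤ) : floquetSolution hN q Δ μ (k * Δ) = floquetExt hN μ (q 0) (k + 1) := by
  rw [floquetSolution, mul_div_cancel_right₀ _ hΔ, Int.ceil_intCast,
    ← floquetPiece_succ hN q hΔ hμ hbc,
    floquetPiece_eq_of_sub_mul_eq hN q hΔ (k := 1) (t := 0) (by push_cast; ring)]
  norm_num

lemma exists_floquetSolution_ne_zero (hΔ : Δ ≠ 0) (hμ : μ ≠ 0)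
    (hbc : q 1 = Bop d N hN μ (q 0)) (hq0 : q 0 ≠ 0) : ∃ t, floquetSolution hN q Δ μ t ≠ 0 := by
  obtain ⟨n, hn⟩ := Function.ne_iff.mp hq0
  exact ⟨((n : ℕ) : ℤ) * Δ, by
    rwa [floquetSolution_intCast_mul hN q hΔ hμ hbc, floquetExt_natCast_add_one]⟩

lemma hasDerivAt_floquetSolution {h : ℕ} {A : Fin (h+1) → ℝ → Matrix (Fin d) (Fin d) ℝ}
    {nn : Fin (h+1) → ℕ} (hΔ : 0 < Δ) (hper : ∀ j t, A j (t + (N : ℝ) * Δ) = A j t) (hμ : μ ≠ 0)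
    (hode : ∀ s ∈ Set.Icc (0:ℝ) 1, HasDerivAt q (Aop d h N hN Δ A nn s μ (q s)) s)
    (hbc : q 1 = Bop d N hN μ (q 0)) (t : ℝ) :
    HasDerivAt (floquetSolution hN q Δ μ) (fun i => ∑ j, ∑ i', (A j t i i' : ℂ) *
      floquetSolution hN q Δ μ (t - nn j * Δ) i') t := by
  have hsucc := floquetPiece_succ hN q hΔ.ne' hμ hbc
  refine (hasDerivAt_ceil_piecewise hΔ (hasDerivAt_floquetPiece hN q hΔ hper hμ hode) hsucc
    (fun k => funext fun i => ?_) t).congr_deriv (funext fun i => ?_)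
  all_goals refine Finset.sum_congr rfl fun j _ => Finset.sum_congr rfl fun i' _ => ?_
  · rw [show k + 1 - nn j = k - nn j + 1 by ring,
      show (k : ℝ) * Δ - nn j * Δ = ((k - nn j : ℤ) : ℝ) * Δ by push_cast; ring, hsucc]
  · rw [floquetSolution_sub_natCast_mul hN q hΔ.ne']

end Piece

theorem bvp_to_eigenfunction_general
    (d h N : ℕ) (hN : 0 < N) (Δ : ℝ) (hΔ : 0 < Δ)
    (A : Fin (h+1) → ℝ → Matrix (Fin d) (Fin d) ℝ)
    (hper : ∀ j t, A j (t + (N : ℝ) * Δ) = A j t)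
    (nn : Fin (h+1) → ℕ)
    (μ : ℂ) (hμ : μ ≠ 0)
    (q : ℝ → Fin N → Fin d → ℂ)
    (hq0 : q 0 ≠ 0)
    (hode : ∀ s ∈ Set.Icc (0:ℝ) 1, HasDerivAt q (Aop d h N hN Δ A nn s μ (q s)) s)
    (hbc : q 1 = Bop d N hN μ (q 0)) :
    IsFloquetSolution d h A nn Δ ((N : ℝ) * Δ) μ
      (fun t i => μ ^ aExp N ⌈t / Δ⌉ *
        q (t / Δ - (((⌈t / Δ⌉ : ℤ) : ℝ) - 1)) (bIdx N hN ⌈t / Δ⌉) i) :=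
  ⟨exists_floquetSolution_ne_zero hN q hΔ.ne' hμ hbc hq0,
    hasDerivAt_floquetSolution hN q hΔ hper hμ hode hbc,
    floquetSolution_add_period hN q hΔ.ne' hμ⟩

/-- **Lemma 2.1 / Theorem 2.2, backward direction.** A solution `q` of the boundary
value problem `q' = A(s,μ)q` on `[0,1]`, `q(1) = B(μ)q(0)`, `q(0) ≠ 0`, gives rise to
a Floquet solution `x(t) = μ^{⌊(n-1)/N⌋} q_{((n-1) mod N)+1}(t/Δ - (n-1))` for
`t ∈ ((n-1)Δ, nΔ]` (here `n = ⌈t/Δ⌉`); in particular `μ` is a Floquet multiplier. -/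
theorem bvp_to_eigenfunction
    (d h N : ℕ) (hd : 0 < d) (hN : 0 < N) (Δ : ℝ) (hΔ : 0 < Δ)
    (A : Fin (h+1) → ℝ → Matrix (Fin d) (Fin d) ℝ)
    (hA : ∀ j, Continuous (A j))
    (hper : ∀ j t, A j (t + (N : ℝ) * Δ) = A j t)
    (nn : Fin (h+1) → ℕ) (hn0 : nn 0 = 0)
    (hmono : ∀ i j : Fin (h+1), 1 ≤ (i : ℕ) → i < j → nn i < nn j)
    (μ : ℂ) (hμ : μ ≠ 0)
    (q : ℝ → Fin N → Fin d → ℂ)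
    (hq0 : q 0 ≠ 0)
    (hode : ∀ s ∈ Set.Icc (0:ℝ) 1, HasDerivAt q (Aop d h N hN Δ A nn s μ (q s)) s)
    (hbc : q 1 = Bop d N hN μ (q 0)) :
    IsFloquetSolution d h A nn Δ ((N : ℝ) * Δ) μ
      (fun t i => μ ^ aExp N ⌈t / Δ⌉ *
        q (t / Δ - (((⌈t / Δ⌉ : ℤ) : ℝ) - 1)) (bIdx N hN ⌈t / Δ⌉) i) :=
  bvp_to_eigenfunction_general d h N hN Δ hΔ A hper nn μ hμ q hq0 hode hbc
end
end

section
/- Let μ ∈ ℂ with μ ≠ 0. There exists a Floquet solution of the scalar delay system with multiplier μ (i.e., a differentiable x : ℝ → ℂ, not identically zero, with x'(t) = Σ_{j=0}^h A_j(t) x(t − jτ) for all t ∈ ℝ and x(t + τ) = μ x(t) for all t ∈ ℝ) if and only if exp(Σ_{j=0}^h μ^{−j} a_j) = μ. (Characteristic equation (2.12) for the Floquet multipliers of a scalar system with commensurate delays and T = τ, from Example 2.5.) -/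
/-!
On a Floquet solution with multiplier `μ ≠ 0` every delayed value is a multiple of the present
one, `x (t - jτ) = μ^(-j) x t`, so the delay equation collapses to the scalar ODE
`x' = b x` with the `τ`-periodic coefficient `b t = Σ_j μ^(-j) A_j t`. Its solutions are the
multiples of `exp (∫₀ᵗ b)`, and by periodicity of `b` such a solution gains exactly the factor
`exp (∫₀^τ b) = exp (Σ_j μ^(-j) a_j)` over one period.
-/

section FloquetShift

variable {G : Type*} [GroupWithZero G] {x : ℝ → G} {μ : G} {τ : ℝ}

theorem apply_add_nat_mul_of_apply_add (hx : ∀ t, x (t + τ) = μ * x t) (n : ℕ) (t : ℝ) :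
    x (t + n * τ) = μ ^ n * x t := by
  induction n with
  | zero => simp
  | succ n ih =>
    rw [Nat.cast_succ, add_one_mul, ← add_assoc, hx, ih, pow_succ', mul_assoc]

theorem apply_sub_nat_mul_of_apply_add (hμ : μ ≠ 0) (hx : ∀ t, x (t + τ) = μ * x t)
    (n : ℕ) (t : ℝ) : x (t - n * τ) = μ ^ (-(n : ℤ)) * x t := by
  conv_rhs => rw [← sub_add_cancel t (n * τ), apply_add_nat_mul_of_apply_add hx]
  rw [zpow_neg, zpow_natCast, inv_mul_cancel_left₀ (pow_ne_zero n hμ)]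

end FloquetShift

section ScalarLinearODE

variable {b : ℝ → ℂ}

theorem hasDerivAt_exp_integral (hb : Continuous b) (t : ℝ) :
    HasDerivAt (fun s => Complex.exp (∫ u in (0 : ℝ)..s, b u))
      (b t * Complex.exp (∫ u in (0 : ℝ)..t, b u)) t := by
  rw [mul_comm]
  exact (hb.integral_hasStrictDerivAt 0 t).hasDerivAt.cexp

theorem eq_mul_exp_integral_of_hasDerivAt {x : ℝ → ℂ} (hb : Continuous b)
    (hx : ∀ t, HasDerivAt x (b t * x t) t) (t : ℝ) :
    x t = x 0 * Complex.exp (∫ u in (0 : ℝ)..t, b u) := by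
  set y : ℝ → ℂ := fun s => x s * Complex.exp (-∫ u in (0 : ℝ)..s, b u)
  have hy : ∀ s, HasDerivAt y 0 s := fun s => by
    have hE : HasDerivAt (fun s => Complex.exp (-∫ u in (0 : ℝ)..s, b u))
        (Complex.exp (-∫ u in (0 : ℝ)..s, b u) * -b s) s :=
      (hb.integral_hasStrictDerivAt 0 s).hasDerivAt.neg.cexp
    have hxy := (hx s).mul hE
    rwa [show b s * x s * Complex.exp (-∫ u in (0 : ℝ)..s, b u) +
      x s * (Complex.exp (-∫ u in (0 : ℝ)..s, b u) * -b s) = 0 by ring] at hxy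
  have hconst : y t = y 0 :=
    is_const_of_deriv_eq_zero (fun s => (hy s).differentiableAt) (fun s => (hy s).deriv) t 0
  simp only [y, intervalIntegral.integral_same, Complex.exp_zero, Complex.exp_neg, inv_one,
    mul_one] at hconst
  exact (mul_inv_eq_iff_eq_mul₀ (Complex.exp_ne_zero _)).mp hconst

theorem Function.Periodic.exp_integral_add_period {τ : ℝ} (hb : Continuous b)
    (hper : Function.Periodic b τ) (t : ℝ) :
    Complex.exp (∫ u in (0 : ℝ)..t + τ, b u) =
      Complex.exp (∫ u in (0 : ℝ)..τ, b u) * Complex.exp (∫ u in (0 : ℝ)..t, b u) := by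
  rw [hper.intervalIntegral_add_eq_add 0 t hb.intervalIntegrable, zero_add, add_comm,
    Complex.exp_add]

end ScalarLinearODE

section DelayEquation

variable {h : ℕ} {A : Fin (h + 1) → ℝ → ℝ}

noncomputable def floquetCoeff (A : Fin (h + 1) → ℝ → ℝ) (μ : ℂ) (t : ℝ) : ℂ :=
  ∑ j : Fin (h + 1), μ ^ (-((j : ℕ) : ℤ)) * (A j t : ℂ)

theorem continuous_floquetCoeff (hA : ∀ j, Continuous (A j)) (μ : ℂ) :
    Continuous (floquetCoeff A μ) :=
  continuous_finsetSum _ fun j _ => continuous_const.mul (Complex.continuous_ofReal.comp (hA j))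

theorem periodic_floquetCoeff {τ : ℝ} (hper : ∀ j t, A j (t + τ) = A j t) (μ : ℂ) :
    Function.Periodic (floquetCoeff A μ) τ := fun t => by
  simp only [floquetCoeff, hper]

theorem integral_floquetCoeff (hA : ∀ j, Continuous (A j)) (μ : ℂ) (τ : ℝ) :
    ∫ t in (0 : ℝ)..τ, floquetCoeff A μ t =
      ∑ j : Fin (h + 1), μ ^ (-((j : ℕ) : ℤ)) * ((∫ t in (0 : ℝ)..τ, A j t : ℝ) : ℂ) := by
  unfold floquetCoeff
  rw [intervalIntegral.integral_finsetSum
    (f := fun (j : Fin (h + 1)) t => μ ^ (-((j : ℕ) : ℤ)) * (A j t : ℂ))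
    fun j _ => (continuous_const.mul (Complex.continuous_ofReal.comp (hA j))).intervalIntegrable _ _]
  simp only [intervalIntegral.integral_const_mul, intervalIntegral.integral_ofReal]

theorem sum_delay_eq_floquetCoeff_mul {τ : ℝ} {μ : ℂ} (hμ : μ ≠ 0) {x : ℝ → ℂ}
    (hx : ∀ t, x (t + τ) = μ * x t) (t : ℝ) :
    ∑ j : Fin (h + 1), (A j t : ℂ) * x (t - ((j : ℕ) : ℝ) * τ) = floquetCoeff A μ t * x t := by
  rw [floquetCoeff, Finset.sum_mul]
  refine Finset.sum_congr rfl fun j _ => ?_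
  rw [apply_sub_nat_mul_of_apply_add hμ hx]
  ring

end DelayEquation

theorem scalar_characteristic_equation_general
    (h : ℕ) (τ : ℝ)
    (A : Fin (h+1) → ℝ → ℝ)
    (hA : ∀ j, Continuous (A j))
    (hper : ∀ j t, A j (t + τ) = A j t)
    (μ : ℂ) (hμ : μ ≠ 0) :
    (∃ x : ℝ → ℂ, (∃ t, x t ≠ 0) ∧
      (∀ t : ℝ, HasDerivAt x (∑ j : Fin (h+1), (A j t : ℂ) * x (t - ((j : ℕ) : ℝ) * τ)) t) ∧
      (∀ t : ℝ, x (t + τ) = μ * x t)) ↔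
    Complex.exp (∑ j : Fin (h+1), μ ^ (-((j : ℕ) : ℤ)) * ((∫ t in (0:ℝ)..τ, A j t : ℝ) : ℂ))
      = μ := by
  have hb := continuous_floquetCoeff hA μ
  have hbper := periodic_floquetCoeff hper μ
  rw [← integral_floquetCoeff hA μ τ]
  constructor
  · rintro ⟨x, ⟨t₀, hxt₀⟩, hderiv, hmul⟩
    have hsol := eq_mul_exp_integral_of_hasDerivAt hb fun t => by
      simpa only [sum_delay_eq_floquetCoeff_mul hμ hmul] using hderiv t
    have hx₀ : x 0 ≠ 0 := fun h₀ => hxt₀ (by simp [hsol t₀, h₀])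
    have hperiod := hmul 0
    rw [zero_add, hsol τ, mul_comm] at hperiod
    exact mul_right_cancel₀ hx₀ hperiod
  · intro hchar
    set X : ℝ → ℂ := fun t => Complex.exp (∫ u in (0 : ℝ)..t, floquetCoeff A μ u)
    have hmul : ∀ t, X (t + τ) = μ * X t := fun t => by
      simp only [X, hbper.exp_integral_add_period hb, hchar]
    refine ⟨X, ⟨0, Complex.exp_ne_zero _⟩, fun t => ?_, hmul⟩
    rw [sum_delay_eq_floquetCoeff_mul hμ hmul]
    exact hasDerivAt_exp_integral hb t

/-- **Example 2.5 / characteristic equation (2.12).** For the scalar `τ`-periodic delay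
system `x'(t) = Σ_{j=0}^h A_j(t) x(t - jτ)` with `T = τ`, a nonzero `μ ∈ ℂ` is a Floquet
multiplier (i.e. there is a not-identically-zero differentiable `x : ℝ → ℂ` solving the
equation with `x(t+τ) = μ x(t)`) if and only if `exp(Σ_j μ^{-j} a_j) = μ`, where
`a_j = ∫_0^τ A_j(t) dt`. -/
theorem scalar_characteristic_equation
    (h : ℕ) (τ : ℝ) (hτ : 0 < τ)
    (A : Fin (h+1) → ℝ → ℝ)
    (hA : ∀ j, Continuous (A j))
    (hper : ∀ j t, A j (t + τ) = A j t)
    (μ : ℂ) (hμ : μ ≠ 0) :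
    (∃ x : ℝ → ℂ, (∃ t, x t ≠ 0) ∧
      (∀ t : ℝ, HasDerivAt x (∑ j : Fin (h+1), (A j t : ℂ) * x (t - ((j : ℕ) : ℝ) * τ)) t) ∧
      (∀ t : ℝ, x (t + τ) = μ * x t)) ↔
    Complex.exp (∑ j : Fin (h+1), μ ^ (-((j : ℕ) : ℤ)) * ((∫ t in (0:ℝ)..τ, A j t : ℝ) : ℂ))
      = μ :=
  scalar_characteristic_equation_general h τ A hA hper μ hμ
end

section
/- Let v ∈ (ℂ^d)^N and μ_0 ∈ ℂ with μ_0 ≠ 0. Suppose that for every μ in some open neighborhood U ⊆ ℂ \ {0} of μ_0 there is a differentiable Q(μ) : [0,1] → (ℂ^d)^N with Q(μ)(0) = v and (Q(μ))'(s) = A(s, μ) Q(μ)(s) for all s ∈ [0,1], and suppose Q(μ_0)(1) = B(μ_0)v (i.e., (μ_0, v) is an eigenpair of the characteristic matrix). Let r : [0,1] → (ℂ^d)^N be differentiable with r(0) = 0 and r'(s) = (∂A/∂μ)(s, μ_0) Q(μ_0)(s) + A(s, μ_0) r(s) for all s ∈ [0,1]. Then the map μ ↦ Q(μ)(1) − B(μ)v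 (i.e., μ ↦ N(μ)v) is complex-differentiable at μ_0 with derivative r(1) − v_N, where v_N = (0, …, 0, v_1) ∈ (ℂ^d)^N. (Proposition 3.1: derivative of the characteristic matrix–vector product with respect to μ via the variational equation.) -/
/-!
`A(s, μ)` acts blockwise with scalar coefficients `Δ μ^{a_k}` and real matrices `A_j(·)`: its
dependence on `μ` sits in the coefficients and its dependence on `s` in the matrices, so
`μ ↦ A(s, μ)` is differentiable at `μ₀ ≠ 0` uniformly in `s ∈ [0, 1]`. For a linear ODE
`q' = L(μ, s) q` with such coefficients, Grönwall's inequality first gives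
`Q(μ) - Q(μ₀) = O(μ - μ₀)`, and then, applied to `Q(μ) - Q(μ₀) - (μ - μ₀) r`, whose derivative is
`L(μ₀, s)` applied to itself plus `o(μ - μ₀)`, shows that this remainder is `o(μ - μ₀)`.
Finally, `B(μ) v` is affine in `μ` with slope `v_N`.
-/

open scoped BigOperators

noncomputable section

/-- The block linear map `(∂A/∂μ)(s,μ)` acting on `(ℂ^d)^N`:
`((∂A/∂μ)(s,μ)q)_n = Δ Σ_j a_{n-n_j} μ^{a_{n-n_j}-1} A_j((s+n-1)Δ) q_{b_{n-n_j}}`. -/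
def AopDmu (d h N : ℕ) (hN : 0 < N) (Δ : ℝ)
    (A : Fin (h+1) → ℝ → Matrix (Fin d) (Fin d) ℝ) (nn : Fin (h+1) → ℕ)
    (s : ℝ) (μ : ℂ) (q : Fin N → Fin d → ℂ) : Fin N → Fin d → ℂ :=
  fun n i => (Δ : ℂ) * ∑ j : Fin (h+1),
    (aExp N (((n : ℕ) : ℤ) + 1 - (nn j : ℤ)) : ℂ) *
      μ ^ (aExp N (((n : ℕ) : ℤ) + 1 - (nn j : ℤ)) - 1) *
      ∑ i' : Fin d, ((A j ((s + ((n : ℕ) : ℝ)) * Δ)) i i' : ℂ) *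
        q (bIdx N hN (((n : ℕ) : ℤ) + 1 - (nn j : ℤ))) i'

open Set Filter Topology Asymptotics

theorem Asymptotics.isLittleO_of_forall_eventually_le_mul {α E F : Type*} [Norm E]
    [SeminormedAddCommGroup F] {l : Filter α} {f : α → E} {g : α → F} {D : ℝ}
    (h : ∀ η > 0, ∀ᶠ x in l, ‖f x‖ ≤ η * D * ‖g x‖) : f =o[l] g := by
  refine isLittleO_iff.2 fun ε hε => ?_
  have hD : ε / (|D| + 1) * D ≤ ε := by
    rw [div_mul_eq_mul_div, div_le_iff₀ (by positivity)]
    nlinarith [le_abs_self D]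
  filter_upwards [h (ε / (|D| + 1)) (by positivity)] with x hx
  exact hx.trans (mul_le_mul_of_nonneg_right hD (norm_nonneg _))

theorem gronwallBound_zero_le_mul_exp {K ε t : ℝ} (hK : 0 ≤ K) (hε : 0 ≤ ε) :
    gronwallBound 0 K ε t ≤ ε * t * Real.exp (K * t) := by
  rcases hK.eq_or_lt with rfl | hK
  · simp [gronwallBound_K0]
  simp only [gronwallBound_of_K_ne_0 hK.ne', zero_mul, zero_add]
  rw [div_mul_eq_mul_div, div_le_iff₀ hK]
  have hexp : Real.exp (-(K * t)) * Real.exp (K * t) = 1 := by rw [← Real.exp_add]; simp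
  have key : Real.exp (K * t) - 1 ≤ K * t * Real.exp (K * t) := by
    nlinarith [mul_le_mul_of_nonneg_right (Real.add_one_le_exp (-(K * t)))
      (Real.exp_pos (K * t)).le]
  nlinarith [mul_le_mul_of_nonneg_left key hε]

theorem norm_le_mul_exp_of_norm_deriv_le {E : Type*} [NormedAddCommGroup E] [NormedSpace ℝ E]
    {f f' : ℝ → E} {K ε a b : ℝ} (hK : 0 ≤ K) (hε : 0 ≤ ε)
    (hf : ∀ x ∈ Icc a b, HasDerivAt f (f' x) x) (ha : f a = 0)
    (bound : ∀ x ∈ Icc a b, ‖f' x‖ ≤ K * ‖f x‖ + ε) :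
    ∀ x ∈ Icc a b, ‖f x‖ ≤ ε * (b - a) * Real.exp (K * (b - a)) := by
  intro x hx
  calc ‖f x‖ ≤ gronwallBound 0 K ε (x - a) :=
        norm_le_gronwallBound_of_norm_deriv_right_le
          (fun y hy => (hf y hy).continuousAt.continuousWithinAt)
          (fun y hy => (hf y (Ico_subset_Icc_self hy)).hasDerivWithinAt) (by simp [ha])
          (fun y hy => bound y (Ico_subset_Icc_self hy)) x hx
    _ ≤ gronwallBound 0 K ε (b - a) := gronwallBound_mono le_rfl hε hK (by linarith [hx.2])
    _ ≤ ε * (b - a) * Real.exp (K * (b - a)) :=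
        gronwallBound_zero_le_mul_exp hK hε

section ParamLinearODE

variable {𝕜 E : Type*} [NontriviallyNormedField 𝕜] [NormedAddCommGroup E] [NormedSpace 𝕜 E]
  {L : 𝕜 → ℝ → E →L[𝕜] E} {L' : ℝ → E →L[𝕜] E} {Q : 𝕜 → ℝ → E} {r : ℝ → E} {μ₀ : 𝕜} {a b K K' : ℝ}

theorem eventually_norm_sub_le_of_isLittleO {S : Set ℝ}
    (hL : (fun p : 𝕜 × ℝ => L p.1 p.2 - L μ₀ p.2 - (p.1 - μ₀) • L' p.2)
      =o[𝓝 μ₀ ×ˢ 𝓟 S] fun p => p.1 - μ₀)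
    (hL' : ∀ s ∈ S, ‖L' s‖ ≤ K') :
    ∀ᶠ μ in 𝓝 μ₀, ∀ s ∈ S, ‖L μ s - L μ₀ s‖ ≤ (K' + 1) * ‖μ - μ₀‖ := by
  filter_upwards [eventually_prod_principal_iff.1 (hL.def one_pos)] with μ hμ s hs
  calc ‖L μ s - L μ₀ s‖
      = ‖(L μ s - L μ₀ s - (μ - μ₀) • L' s) + (μ - μ₀) • L' s‖ := by rw [sub_add_cancel]
    _ ≤ 1 * ‖μ - μ₀‖ + ‖μ - μ₀‖ * K' := by
        grw [norm_add_le, hμ s hs, norm_smul, hL' s hs]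
    _ = (K' + 1) * ‖μ - μ₀‖ := by ring

variable [NormedSpace ℝ E]

theorem exists_bound_norm_of_hasDerivAt {f f' : ℝ → E} (hf : ∀ s ∈ Icc a b, HasDerivAt f (f' s) s) :
    ∃ M, ∀ s ∈ Icc a b, ‖f s‖ ≤ M :=
  isCompact_Icc.exists_bound_of_continuousOn fun s hs =>
    (hf s hs).continuousAt.continuousWithinAt

theorem isBigO_sub_of_linearODE
    (hQ : ∀ᶠ μ in 𝓝 μ₀, Q μ a = Q μ₀ a ∧ ∀ s ∈ Icc a b, HasDerivAt (Q μ) (L μ s (Q μ s)) s)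
    (hLb : ∀ s ∈ Icc a b, ‖L μ₀ s‖ ≤ K) (hL'b : ∀ s ∈ Icc a b, ‖L' s‖ ≤ K')
    (hL : (fun p : 𝕜 × ℝ => L p.1 p.2 - L μ₀ p.2 - (p.1 - μ₀) • L' p.2)
      =o[𝓝 μ₀ ×ˢ 𝓟 (Icc a b)] fun p => p.1 - μ₀) :
    (fun p : 𝕜 × ℝ => Q p.1 p.2 - Q μ₀ p.2) =O[𝓝 μ₀ ×ˢ 𝓟 (Icc a b)] fun p => p.1 - μ₀ := by
  obtain ⟨hQ₀a, hQ₀⟩ := hQ.self_of_nhds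
  obtain ⟨M, hM⟩ := exists_bound_norm_of_hasDerivAt hQ₀
  refine IsBigO.of_bound ((K' + 1) * M * (b - a) * Real.exp ((K + K' + 1) * (b - a))) ?_
  refine eventually_prod_principal_iff.2 ?_
  filter_upwards [hQ, eventually_norm_sub_le_of_isLittleO hL hL'b, Metric.ball_mem_nhds μ₀ one_pos]
    with μ ⟨hQμa, hQμ⟩ hLμ hμ
  rw [mem_ball_iff_norm] at hμ
  intro s hs
  have hK : 0 ≤ K := (norm_nonneg _).trans (hLb s hs)
  have hK' : 0 ≤ K' := (norm_nonneg _).trans (hL'b s hs)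
  have hM0 : 0 ≤ M := (norm_nonneg _).trans (hM s hs)
  have hw := norm_le_mul_exp_of_norm_deriv_le (f := fun s => Q μ s - Q μ₀ s)
    (f' := fun s => L μ s (Q μ s - Q μ₀ s) + (L μ s - L μ₀ s) (Q μ₀ s))
    (K := K + K' + 1) (ε := (K' + 1) * ‖μ - μ₀‖ * M) (by positivity) (by positivity)
    (fun s hs => by
      refine ((hQμ s hs).sub (hQ₀ s hs)).congr_deriv ?_
      simp only [map_sub, sub_apply]
      abel)
    (by simp [hQμa]) (fun s hs => ?_) s hs
  · exact hw.trans_eq (by ring)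
  have hLμs : ‖L μ s‖ ≤ K + K' + 1 := by
    calc ‖L μ s‖ = ‖L μ₀ s + (L μ s - L μ₀ s)‖ := by rw [add_sub_cancel]
      _ ≤ K + (K' + 1) * 1 := by grw [norm_add_le, hLb s hs, hLμ s hs, hμ.le]
      _ = K + K' + 1 := by ring
  calc ‖L μ s (Q μ s - Q μ₀ s) + (L μ s - L μ₀ s) (Q μ₀ s)‖
      ≤ (K + K' + 1) * ‖Q μ s - Q μ₀ s‖ + (K' + 1) * ‖μ - μ₀‖ * M := by
        grw [norm_add_le, ContinuousLinearMap.le_opNorm, ContinuousLinearMap.le_opNorm, hLμs,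
          hLμ s hs, hM s hs]

variable [SMulCommClass ℝ 𝕜 E]

theorem exists_forall_eventually_norm_sub_sub_smul_le (hab : a ≤ b)
    (hQ : ∀ᶠ μ in 𝓝 μ₀, Q μ a = Q μ₀ a ∧ ∀ s ∈ Icc a b, HasDerivAt (Q μ) (L μ s (Q μ s)) s)
    (hra : r a = 0) (hr : ∀ s ∈ Icc a b, HasDerivAt r (L' s (Q μ₀ s) + L μ₀ s (r s)) s)
    (hLb : ∀ s ∈ Icc a b, ‖L μ₀ s‖ ≤ K) (hL'b : ∀ s ∈ Icc a b, ‖L' s‖ ≤ K')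
    (hL : (fun p : 𝕜 × ℝ => L p.1 p.2 - L μ₀ p.2 - (p.1 - μ₀) • L' p.2)
      =o[𝓝 μ₀ ×ˢ 𝓟 (Icc a b)] fun p => p.1 - μ₀) :
    ∃ D, ∀ η > 0, ∀ᶠ μ in 𝓝 μ₀, ‖Q μ b - Q μ₀ b - (μ - μ₀) • r b‖ ≤ η * D * ‖μ - μ₀‖ := by
  obtain ⟨hQ₀a, hQ₀⟩ := hQ.self_of_nhds
  obtain ⟨M, hM⟩ := exists_bound_norm_of_hasDerivAt hQ₀
  obtain ⟨C, hC0, hC⟩ := (isBigO_sub_of_linearODE hQ hLb hL'b hL).exists_nonneg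
  have hb : b ∈ Icc a b := right_mem_Icc.2 hab
  have hK : 0 ≤ K := (norm_nonneg _).trans (hLb b hb)
  have hK' : 0 ≤ K' := (norm_nonneg _).trans (hL'b b hb)
  have hM0 : 0 ≤ M := (norm_nonneg _).trans (hM b hb)
  refine ⟨(M + (K' + 1) * C) * (b - a) * Real.exp (K * (b - a)), fun η hη => ?_⟩
  filter_upwards [hQ, eventually_prod_principal_iff.1 (hL.def hη),
    eventually_prod_principal_iff.1 hC.bound, eventually_norm_sub_le_of_isLittleO hL hL'b,
    Metric.ball_mem_nhds μ₀ hη] with μ ⟨hQμa, hQμ⟩ hrem hlip hLμ hμ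
  rw [mem_ball_iff_norm] at hμ
  have hw := norm_le_mul_exp_of_norm_deriv_le (f := fun s => Q μ s - Q μ₀ s - (μ - μ₀) • r s)
    (f' := fun s => L μ₀ s (Q μ s - Q μ₀ s - (μ - μ₀) • r s)
      + (L μ s - L μ₀ s - (μ - μ₀) • L' s) (Q μ₀ s) + (L μ s - L μ₀ s) (Q μ s - Q μ₀ s))
    (K := K) (ε := η * ‖μ - μ₀‖ * (M + (K' + 1) * C)) hK (by positivity)
    (fun s hs => by
      refine (((hQμ s hs).sub (hQ₀ s hs)).sub ((hr s hs).const_smul (μ - μ₀))).congr_deriv ?_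
      simp only [map_sub, map_smul, sub_apply, smul_apply, smul_add]
      abel)
    (by simp [hQμa, hra]) (fun s hs => ?_) b hb
  · exact hw.trans_eq (by ring)
  calc ‖L μ₀ s (Q μ s - Q μ₀ s - (μ - μ₀) • r s)
        + (L μ s - L μ₀ s - (μ - μ₀) • L' s) (Q μ₀ s) + (L μ s - L μ₀ s) (Q μ s - Q μ₀ s)‖
      ≤ K * ‖Q μ s - Q μ₀ s - (μ - μ₀) • r s‖ + η * ‖μ - μ₀‖ * M
        + (K' + 1) * ‖μ - μ₀‖ * (C * ‖μ - μ₀‖) := by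
        grw [norm_add_le, norm_add_le, ContinuousLinearMap.le_opNorm,
          ContinuousLinearMap.le_opNorm, ContinuousLinearMap.le_opNorm, hLb s hs, hrem s hs,
          hM s hs, hLμ s hs, hlip s hs]
    _ ≤ K * ‖Q μ s - Q μ₀ s - (μ - μ₀) • r s‖ + η * ‖μ - μ₀‖ * (M + (K' + 1) * C) := by
        have : (K' + 1) * ‖μ - μ₀‖ * (C * ‖μ - μ₀‖) ≤ (K' + 1) * ‖μ - μ₀‖ * (C * η) := by
          gcongr
        nlinarith

theorem hasDerivAt_of_linearODE (hab : a ≤ b)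
    (hQ : ∀ᶠ μ in 𝓝 μ₀, Q μ a = Q μ₀ a ∧ ∀ s ∈ Icc a b, HasDerivAt (Q μ) (L μ s (Q μ s)) s)
    (hra : r a = 0) (hr : ∀ s ∈ Icc a b, HasDerivAt r (L' s (Q μ₀ s) + L μ₀ s (r s)) s)
    (hLb : ∀ s ∈ Icc a b, ‖L μ₀ s‖ ≤ K) (hL'b : ∀ s ∈ Icc a b, ‖L' s‖ ≤ K')
    (hL : (fun p : 𝕜 × ℝ => L p.1 p.2 - L μ₀ p.2 - (p.1 - μ₀) • L' p.2)
      =o[𝓝 μ₀ ×ˢ 𝓟 (Icc a b)] fun p => p.1 - μ₀) :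
    HasDerivAt (fun μ => Q μ b) (r b) μ₀ := by
  obtain ⟨D, hD⟩ := exists_forall_eventually_norm_sub_sub_smul_le hab hQ hra hr hLb hL'b hL
  exact hasDerivAt_iff_isLittleO.2 (isLittleO_of_forall_eventually_le_mul hD)

end ParamLinearODE

section BlockOp

variable {𝕜 ι κ δ : Type*} [NontriviallyNormedField 𝕜] [Fintype ι] [Fintype κ] [Fintype δ]

theorem norm_apply_apply_le_pi_norm {α β F : Type*} [Fintype α] [Fintype β]
    [SeminormedAddCommGroup F] (f : α → β → F) (x : α) (y : β) : ‖f x y‖ ≤ ‖f‖ :=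
  (norm_le_pi_norm (f x) y).trans (norm_le_pi_norm f x)

def blockOp (c : κ → ι → 𝕜) (m : κ → ι → δ → δ → 𝕜) (idx : κ → ι → κ) :
    (κ → δ → 𝕜) →L[𝕜] (κ → δ → 𝕜) :=
  LinearMap.mkContinuous
    { toFun := fun q n i => ∑ j, c n j * ∑ i', m n j i i' * q (idx n j) i'
      map_add' := fun q q' => by
        ext n i
        simp only [Pi.add_apply, mul_add, Finset.sum_add_distrib]
      map_smul' := fun t q => by
        ext n i
        simp only [Pi.smul_apply, smul_eq_mul, RingHom.id_apply, Finset.mul_sum]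
        exact Finset.sum_congr rfl fun _ _ => Finset.sum_congr rfl fun _ _ => by ring }
    (Fintype.card ι * Fintype.card δ * ‖c‖ * ‖m‖) fun q => by
      refine (pi_norm_le_iff_of_nonneg (by positivity)).2 fun n =>
        (pi_norm_le_iff_of_nonneg (by positivity)).2 fun i => ?_
      calc ‖∑ j, c n j * ∑ i', m n j i i' * q (idx n j) i'‖
          ≤ ∑ _j : ι, ‖c‖ * ∑ _i' : δ, ‖m‖ * ‖q‖ := by
            refine norm_sum_le_of_le _ fun j _ => ?_
            grw [norm_mul, norm_apply_apply_le_pi_norm c n j, norm_sum_le]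
            gcongr with i'
            grw [norm_mul, norm_apply_apply_le_pi_norm q,
              (norm_apply_apply_le_pi_norm (m n j) i i').trans (norm_apply_apply_le_pi_norm m n j)]
        _ = _ := by simp [Finset.sum_const, Finset.card_univ]; ring

variable {c c₁ c₂ : κ → ι → 𝕜} {m : κ → ι → δ → δ → 𝕜} {idx : κ → ι → κ}

@[simp]
theorem blockOp_apply (q : κ → δ → 𝕜) (n : κ) (i : δ) :
    blockOp c m idx q n i = ∑ j, c n j * ∑ i', m n j i i' * q (idx n j) i' :=
  rfl

theorem norm_blockOp_le :
    ‖blockOp c m idx‖ ≤ Fintype.card ι * Fintype.card δ * ‖c‖ * ‖m‖ :=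
  LinearMap.mkContinuous_norm_le _ (by positivity) _

theorem blockOp_sub : blockOp (c₁ - c₂) m idx = blockOp c₁ m idx - blockOp c₂ m idx := by
  ext q n i
  simp [sub_mul]

theorem blockOp_smul (t : 𝕜) : blockOp (t • c) m idx = t • blockOp c m idx := by
  ext q n i
  simp [Finset.mul_sum, mul_assoc]

theorem isLittleO_blockOp_sub_sub_smul {α : Type*} {c : 𝕜 → κ → ι → 𝕜} {c' : κ → ι → 𝕜}
    {μ₀ : 𝕜} (hc : HasDerivAt c c' μ₀) {m : α → κ → ι → δ → δ → 𝕜} {S : Set α} {M : ℝ}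
    (hm : ∀ s ∈ S, ‖m s‖ ≤ M) :
    (fun p : 𝕜 × α => blockOp (c p.1) (m p.2) idx - blockOp (c μ₀) (m p.2) idx
      - (p.1 - μ₀) • blockOp c' (m p.2) idx) =o[𝓝 μ₀ ×ˢ 𝓟 S] fun p => p.1 - μ₀ := by
  refine IsBigO.trans_isLittleO ?_ ((hasDerivAt_iff_isLittleO.1 hc).comp_tendsto tendsto_fst)
  refine IsBigO.of_bound (Fintype.card ι * Fintype.card δ * M)
    (eventually_prod_principal_iff.2 (Eventually.of_forall fun μ s hs => ?_))
  dsimp only [Function.comp_apply]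
  rw [← blockOp_sub, ← blockOp_smul, ← blockOp_sub]
  grw [norm_blockOp_le, hm s hs]
  exact (by ring : _ = _).le

end BlockOp

section DelaySystem

variable {d h N : ℕ}

def delayExp (N : ℕ) (nn : Fin (h + 1) → ℕ) (n : Fin N) (j : Fin (h + 1)) : ℤ :=
  aExp N ((n : ℕ) + 1 - (nn j : ℤ))

def delayCoeff (N : ℕ) (nn : Fin (h + 1) → ℕ) (Δ : ℝ) (μ : ℂ) : Fin N → Fin (h + 1) → ℂ :=
  fun n j => Δ * μ ^ delayExp N nn n j

def delayCoeffDeriv (N : ℕ) (nn : Fin (h + 1) → ℕ) (Δ : ℝ) (μ : ℂ) : Fin N → Fin (h + 1) → ℂ :=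
  fun n j => Δ * (delayExp N nn n j * μ ^ (delayExp N nn n j - 1))

def delayIdx (N : ℕ) (hN : 0 < N) (nn : Fin (h + 1) → ℕ) : Fin N → Fin (h + 1) → Fin N :=
  fun n j => bIdx N hN ((n : ℕ) + 1 - (nn j : ℤ))

def delayMatrix (N : ℕ) (Δ : ℝ) (A : Fin (h + 1) → ℝ → Matrix (Fin d) (Fin d) ℝ) (s : ℝ) :
    Fin N → Fin (h + 1) → Fin d → Fin d → ℂ :=
  fun n j i i' => A j ((s + (n : ℕ)) * Δ) i i'

variable (hN : 0 < N) (Δ : ℝ) (A : Fin (h + 1) → ℝ → Matrix (Fin d) (Fin d) ℝ)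
  (nn : Fin (h + 1) → ℕ)

theorem Aop_eq_blockOp (s : ℝ) (μ : ℂ) :
    Aop d h N hN Δ A nn s μ
      = blockOp (delayCoeff N nn Δ μ) (delayMatrix N Δ A s) (delayIdx N hN nn) := by
  funext q n i
  simp [Aop, delayCoeff, delayExp, delayMatrix, delayIdx, Finset.mul_sum, mul_assoc]

theorem AopDmu_eq_blockOp (s : ℝ) (μ : ℂ) :
    AopDmu d h N hN Δ A nn s μ
      = blockOp (delayCoeffDeriv N nn Δ μ) (delayMatrix N Δ A s) (delayIdx N hN nn) := by
  funext q n i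
  simp [AopDmu, delayCoeffDeriv, delayExp, delayMatrix, delayIdx, Finset.mul_sum, mul_assoc]

theorem hasDerivAt_delayCoeff {μ : ℂ} (hμ : μ ≠ 0) :
    HasDerivAt (delayCoeff N nn Δ) (delayCoeffDeriv N nn Δ μ) μ := by
  refine hasDerivAt_pi.2 fun n => hasDerivAt_pi.2 fun j => ?_
  unfold delayCoeff delayCoeffDeriv
  exact (hasDerivAt_zpow _ μ (Or.inl hμ)).const_mul _

theorem continuous_delayMatrix (hA : ∀ j, Continuous (A j)) :
    Continuous (delayMatrix N Δ A) := by
  unfold delayMatrix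
  fun_prop

end DelaySystem

theorem hasDerivAt_Bop {d N : ℕ} (hN : 0 < N) (v : Fin N → Fin d → ℂ) (μ₀ : ℂ) :
    HasDerivAt (fun μ => Bop d N hN μ v)
      (fun (n : Fin N) (i : Fin d) => if (n : ℕ) = N - 1 then v ⟨0, hN⟩ i else 0) μ₀ := by
  refine hasDerivAt_pi.2 fun n => hasDerivAt_pi.2 fun i => ?_
  by_cases hn : (n : ℕ) + 1 < N
  · simpa [Bop, hn, show (n : ℕ) ≠ N - 1 by omega] using hasDerivAt_const μ₀ _
  · simp only [Bop, dif_neg hn, if_pos (show (n : ℕ) = N - 1 by omega)]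
    exact hasDerivAt_mul_const _

theorem charmatrix_deriv_mu_general
    (d h N : ℕ) (hN : 0 < N) (Δ : ℝ)
    (A : Fin (h+1) → ℝ → Matrix (Fin d) (Fin d) ℝ)
    (hA : ∀ j, Continuous (A j))
    (nn : Fin (h+1) → ℕ)
    (μ0 : ℂ) (hμ0 : μ0 ≠ 0) (v : Fin N → Fin d → ℂ)
    (U : Set ℂ) (hUopen : IsOpen U) (hUμ : μ0 ∈ U)
    (Q : ℂ → ℝ → Fin N → Fin d → ℂ)
    (hQ0 : ∀ μ ∈ U, Q μ 0 = v)
    (hQode : ∀ μ ∈ U, ∀ s ∈ Set.Icc (0:ℝ) 1,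
      HasDerivAt (Q μ) (Aop d h N hN Δ A nn s μ (Q μ s)) s)
    (r : ℝ → Fin N → Fin d → ℂ) (hr0 : r 0 = 0)
    (hrode : ∀ s ∈ Set.Icc (0:ℝ) 1, HasDerivAt r
      (fun n i => AopDmu d h N hN Δ A nn s μ0 (Q μ0 s) n i
        + Aop d h N hN Δ A nn s μ0 (r s) n i) s) :
    HasDerivAt (fun μ : ℂ => fun (n : Fin N) (i : Fin d) => Q μ 1 n i - Bop d N hN μ v n i)
      (fun (n : Fin N) (i : Fin d) =>
        r 1 n i - (if (n : ℕ) = N - 1 then v ⟨0, hN⟩ i else 0)) μ0 := by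
  obtain ⟨M, hM⟩ := isCompact_Icc.exists_bound_of_continuousOn
    (continuous_delayMatrix (N := N) Δ A hA).continuousOn
  have hQd : HasDerivAt (fun μ => Q μ 1) (r 1) μ0 := by
    refine hasDerivAt_of_linearODE
      (L := fun μ s => blockOp (delayCoeff N nn Δ μ) (delayMatrix N Δ A s) (delayIdx N hN nn))
      (L' := fun s => blockOp (delayCoeffDeriv N nn Δ μ0) (delayMatrix N Δ A s) (delayIdx N hN nn))
      zero_le_one ?_ hr0 ?_ (fun s hs => norm_blockOp_le.trans (by grw [hM s hs]))
      (fun s hs => norm_blockOp_le.trans (by grw [hM s hs]))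
      (isLittleO_blockOp_sub_sub_smul (hasDerivAt_delayCoeff Δ nn hμ0) hM)
    · filter_upwards [hUopen.mem_nhds hUμ] with μ hμ
      refine ⟨by rw [hQ0 μ hμ, hQ0 μ0 hUμ], fun s hs => ?_⟩
      simpa only [Aop_eq_blockOp] using hQode μ hμ s hs
    · intro s hs
      refine (hrode s hs).congr_deriv ?_
      rw [Aop_eq_blockOp, AopDmu_eq_blockOp]
      rfl
  exact hQd.sub (hasDerivAt_Bop hN v μ0)

/-- **Proposition 3.1.** If `(μ₀, v)` is an eigenpair of the characteristic matrix
(`Q(μ₀)(1) = B(μ₀)v`, where `Q(μ)` solves `Q' = A(s,μ)Q`, `Q(0) = v` for all `μ` in a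
neighborhood `U ⊆ ℂ \ {0}` of `μ₀`), and `r` solves the variational equation
`r' = (∂A/∂μ)(s,μ₀) Q(μ₀) + A(s,μ₀) r`, `r(0) = 0`, then `μ ↦ N(μ)v = Q(μ)(1) - B(μ)v`
is complex-differentiable at `μ₀` with derivative `r(1) - v_N`,
`v_N = (0,…,0,v₁)`. -/
theorem charmatrix_deriv_mu
    (d h N : ℕ) (hd : 0 < d) (hN : 0 < N) (Δ : ℝ) (hΔ : 0 < Δ)
    (A : Fin (h+1) → ℝ → Matrix (Fin d) (Fin d) ℝ)
    (hA : ∀ j, Continuous (A j))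
    (hper : ∀ j t, A j (t + (N : ℝ) * Δ) = A j t)
    (nn : Fin (h+1) → ℕ) (hn0 : nn 0 = 0)
    (hmono : ∀ i j : Fin (h+1), 1 ≤ (i : ℕ) → i < j → nn i < nn j)
    (μ0 : ℂ) (hμ0 : μ0 ≠ 0) (v : Fin N → Fin d → ℂ)
    (U : Set ℂ) (hUopen : IsOpen U) (hU0 : (0:ℂ) ∉ U) (hUμ : μ0 ∈ U)
    (Q : ℂ → ℝ → Fin N → Fin d → ℂ)
    (hQ0 : ∀ μ ∈ U, Q μ 0 = v)
    (hQode : ∀ μ ∈ U, ∀ s ∈ Set.Icc (0:ℝ) 1,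
      HasDerivAt (Q μ) (Aop d h N hN Δ A nn s μ (Q μ s)) s)
    (heig : Q μ0 1 = Bop d N hN μ0 v)
    (r : ℝ → Fin N → Fin d → ℂ) (hr0 : r 0 = 0)
    (hrode : ∀ s ∈ Set.Icc (0:ℝ) 1, HasDerivAt r
      (fun n i => AopDmu d h N hN Δ A nn s μ0 (Q μ0 s) n i
        + Aop d h N hN Δ A nn s μ0 (r s) n i) s) :
    HasDerivAt (fun μ : ℂ => fun (n : Fin N) (i : Fin d) => Q μ 1 n i - Bop d N hN μ v n i)
      (fun (n : Fin N) (i : Fin d) =>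
        r 1 n i - (if (n : ℕ) = N - 1 then v ⟨0, hN⟩ i else 0)) μ0 :=
  charmatrix_deriv_mu_general d h N hN Δ A hA nn μ0 hμ0 v U hUopen hUμ Q hQ0 hQode r hr0 hrode
end
end

section
/- Let μ ∈ ℂ with μ ≠ 0 and let u, v ∈ (ℂ^d)^N. Let q : [0,1] → (ℂ^d)^N be differentiable with q'(s) = A(s, conj(μ)) q(s) for all s ∈ [0,1] and q(0) = u, and let p : [0,1] → (ℂ^d)^N be differentiable with p'(s) = −A(s, μ)ᵀ p(s) for all s ∈ [0,1] and p(1) = v, where ᵀ denotes the transpose without conjugation. Then (q(1) − B(conj(μ))u)* v = u* (p(0) − B(μ)ᵀ v), where w* z denotes the conjugate-transpose pairing Σ_i conj(w_i) z_i. Equivalently, the transposed characteristic matrix satisfies M(μ) = N(conj(μ))*. (The key identity in the proof of Theorem 4.1.) -/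
open scoped BigOperators

noncomputable section

/-- The transpose (without conjugation) `A(s,μ)ᵀ` of the block map `A(s,μ)`,
acting on `p ∈ (ℂ^d)^N`. -/
def AopT (d h N : ℕ) (hN : 0 < N) (Δ : ℝ)
    (A : Fin (h+1) → ℝ → Matrix (Fin d) (Fin d) ℝ) (nn : Fin (h+1) → ℕ)
    (s : ℝ) (μ : ℂ) (p : Fin N → Fin d → ℂ) : Fin N → Fin d → ℂ :=
  fun n i => (Δ : ℂ) * ∑ m : Fin N, ∑ j : Fin (h+1),
    if n = bIdx N hN (((m : ℕ) : ℤ) + 1 - (nn j : ℤ)) then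
      μ ^ aExp N (((m : ℕ) : ℤ) + 1 - (nn j : ℤ)) *
        ∑ i' : Fin d, ((A j ((s + ((m : ℕ) : ℝ)) * Δ)) i' i : ℂ) * p m i'
    else 0

/-- The transpose `B(μ)ᵀ` of `B(μ)`:
`(B(μ)ᵀ v)_1 = μ v_N` and `(B(μ)ᵀ v)_n = v_{n-1}` for `n = 2,…,N`. -/
def BopT (d N : ℕ) (hN : 0 < N) (μ : ℂ) (v : Fin N → Fin d → ℂ) : Fin N → Fin d → ℂ :=
  fun n i => if hn : 0 < (n : ℕ) then
      v ⟨(n : ℕ) - 1, by have := n.isLt; omega⟩ i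
    else μ * v ⟨N - 1, by omega⟩ i

/-
Since `A(s, conj μ)* = A(s, μ)ᵀ` for the sesquilinear pairing `⟨w, z⟩ = Σ conj(wᵢ) zᵢ`, the
pairing `⟨q(s), p(s)⟩` of a solution of `q' = A(s, conj μ) q` with a solution of the adjoint
system `p' = -A(s, μ)ᵀ p` has zero derivative, hence `⟨q(1), v⟩ = ⟨u, p(0)⟩`. The remaining terms
agree because `B(conj μ)* = B(μ)ᵀ`: both are weighted cyclic shifts of the `N` blocks.
-/

open scoped ComplexConjugate
open Finset

section Pairing

variable {ι κ : Type*} [Fintype ι] [Fintype κ]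

def pairing (x y : ι → κ → ℂ) : ℂ := ∑ n, ∑ i, conj (x n i) * y n i

theorem pairing_sub_left (x x' y : ι → κ → ℂ) :
    pairing (x - x') y = pairing x y - pairing x' y := by
  simp only [pairing, Pi.sub_apply, map_sub, sub_mul, sum_sub_distrib]

theorem pairing_sub_right (x y y' : ι → κ → ℂ) :
    pairing x (y - y') = pairing x y - pairing x y' := by
  simp only [pairing, Pi.sub_apply, mul_sub, sum_sub_distrib]

theorem pairing_neg_right (x y : ι → κ → ℂ) : pairing x (-y) = -pairing x y := by
  simp only [pairing, Pi.neg_apply, mul_neg, sum_neg_distrib]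

theorem HasDerivAt.pairing {q p : ℝ → ι → κ → ℂ} {q' p' : ι → κ → ℂ} {s : ℝ}
    (hq : HasDerivAt q q' s) (hp : HasDerivAt p p' s) :
    HasDerivAt (fun t => pairing (q t) (p t)) (pairing q' (p s) + pairing (q s) p') s := by
  simp only [_root_.pairing, ← sum_add_distrib]
  refine HasDerivAt.fun_sum fun n _ => HasDerivAt.fun_sum fun i _ => ?_
  exact (hasDerivAt_pi.mp (hasDerivAt_pi.mp hq n) i).star.mul
    (hasDerivAt_pi.mp (hasDerivAt_pi.mp hp n) i)

theorem pairing_eq_of_hasDerivAt_adjoint {X Y : ℝ → (ι → κ → ℂ) → ι → κ → ℂ}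
    (hXY : ∀ s x y, pairing (X s x) y = pairing x (Y s y)) {q p : ℝ → ι → κ → ℂ} {a b : ℝ}
    (hab : a ≤ b) (hq : ∀ s ∈ Set.Icc a b, HasDerivAt q (X s (q s)) s)
    (hp : ∀ s ∈ Set.Icc a b, HasDerivAt p (-Y s (p s)) s) :
    pairing (q b) (p b) = pairing (q a) (p a) := by
  have hderiv : ∀ s ∈ Set.Icc a b, HasDerivAt (fun t => pairing (q t) (p t)) 0 s := by
    intro s hs
    have := (hq s hs).pairing (hp s hs)
    rwa [pairing_neg_right, hXY, add_neg_cancel] at this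
  exact constant_of_has_deriv_right_zero
    (fun s hs => (hderiv s hs).continuousAt.continuousWithinAt)
    (fun s hs => (hderiv s (Set.Ico_subset_Icc_self hs)).hasDerivWithinAt) b
    (Set.right_mem_Icc.mpr hab)

end Pairing

section Shift

variable {d N : ℕ} (hN : 0 < N)

theorem val_finRotate (n : Fin N) :
    (finRotate N n : ℕ) = if (n : ℕ) + 1 < N then (n : ℕ) + 1 else 0 := by
  cases N with
  | zero => exact n.elim0
  | succ M =>
    rw [coe_finRotate]
    simp only [Fin.ext_iff, Fin.val_last]
    split_ifs <;> omega

theorem Bop_apply (μ : ℂ) (u : Fin N → Fin d → ℂ) (n : Fin N) (i : Fin d) :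
    Bop d N hN μ u n i = (if (n : ℕ) + 1 < N then 1 else μ) * u (finRotate N n) i := by
  have hrot := val_finRotate n
  unfold Bop
  split_ifs with hn
  · rw [one_mul]
    exact congrArg (u · i) (Fin.ext (by rw [hrot, if_pos hn]))
  · exact congrArg (μ * u · i) (Fin.ext (by rw [hrot, if_neg hn]))

theorem BopT_finRotate (μ : ℂ) (w : Fin N → Fin d → ℂ) (n : Fin N) (i : Fin d) :
    BopT d N hN μ w (finRotate N n) i = (if (n : ℕ) + 1 < N then 1 else μ) * w n i := by
  have hrot := val_finRotate n
  unfold BopT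
  split_ifs with h₁ h₂ h₂
  · rw [one_mul]
    exact congrArg (w · i) (Fin.ext (by simp only [hrot, if_pos h₂]; omega))
  · simp only [hrot, if_neg h₂] at h₁; omega
  · simp only [hrot, if_pos h₂] at h₁; omega
  · exact congrArg (μ * w · i) (Fin.ext (by simp only; omega))

theorem pairing_Bop_conj (μ : ℂ) (u w : Fin N → Fin d → ℂ) :
    pairing (Bop d N hN (conj μ) u) w = pairing u (BopT d N hN μ w) := by
  unfold pairing
  rw [← Equiv.sum_comp (finRotate N) (fun n => ∑ i, conj (u n i) * BopT d N hN μ w n i)]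
  refine sum_congr rfl fun n _ => sum_congr rfl fun i _ => ?_
  rw [Bop_apply, BopT_finRotate]
  split_ifs <;> simp only [map_mul, map_one, Complex.conj_conj] <;> ring

end Shift

section Delay

variable {d h N : ℕ} (hN : 0 < N) (Δ : ℝ) (A : Fin (h+1) → ℝ → Matrix (Fin d) (Fin d) ℝ)
  (nn : Fin (h+1) → ℕ) (s : ℝ) (μ : ℂ)

def delayForm (x y : Fin N → Fin d → ℂ) : ℂ :=
  Δ * ∑ m : Fin N, ∑ j : Fin (h+1), μ ^ aExp N ((m : ℤ) + 1 - nn j) *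
    ∑ i, ∑ i', (A j ((s + m) * Δ) i i' : ℂ) * conj (x (bIdx N hN ((m : ℤ) + 1 - nn j)) i') * y m i

theorem pairing_Aop_conj_eq_delayForm (x y : Fin N → Fin d → ℂ) :
    pairing (Aop d h N hN Δ A nn s (conj μ) x) y = delayForm hN Δ A nn s μ x y := by
  simp only [pairing, Aop, delayForm, map_mul, map_sum, map_zpow₀, Complex.conj_ofReal,
    Complex.conj_conj, mul_sum, sum_mul]
  refine sum_congr rfl fun m _ => ?_
  rw [sum_comm]
  exact sum_congr rfl fun j _ => sum_congr rfl fun i _ => sum_congr rfl fun i' _ => by ring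

theorem pairing_AopT_eq_delayForm (x y : Fin N → Fin d → ℂ) :
    pairing x (AopT d h N hN Δ A nn s μ y) = delayForm hN Δ A nn s μ x y := by
  simp only [pairing, AopT, delayForm, mul_sum, mul_ite, mul_zero]
  -- bring the block index `n` innermost, where the indicator `n = b_{m+1-n_j}` evaluates it
  conv_lhs =>
    rw [sum_comm]; enter [2, i]; rw [sum_comm]; enter [2, m]; rw [sum_comm]
  simp only [sum_ite_eq', mem_univ, if_true]
  conv_lhs =>
    rw [sum_comm]; enter [2, m]; rw [sum_comm]; enter [2, j]; rw [sum_comm]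
  exact sum_congr rfl fun _ _ => sum_congr rfl fun _ _ => sum_congr rfl fun _ _ =>
    sum_congr rfl fun _ _ => by ring

theorem pairing_Aop_conj (x y : Fin N → Fin d → ℂ) :
    pairing (Aop d h N hN Δ A nn s (conj μ) x) y = pairing x (AopT d h N hN Δ A nn s μ y) := by
  rw [pairing_Aop_conj_eq_delayForm, pairing_AopT_eq_delayForm]

end Delay

theorem transposed_charmatrix_identity_general
    (d h N : ℕ) (hN : 0 < N) (Δ : ℝ)
    (A : Fin (h+1) → ℝ → Matrix (Fin d) (Fin d) ℝ)
    (nn : Fin (h+1) → ℕ)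
    (μ : ℂ)
    (u v : Fin N → Fin d → ℂ)
    (q p : ℝ → Fin N → Fin d → ℂ)
    (hq0 : q 0 = u)
    (hqode : ∀ s ∈ Set.Icc (0:ℝ) 1,
      HasDerivAt q (Aop d h N hN Δ A nn s (starRingEnd ℂ μ) (q s)) s)
    (hp1 : p 1 = v)
    (hpode : ∀ s ∈ Set.Icc (0:ℝ) 1,
      HasDerivAt p (fun n i => -(AopT d h N hN Δ A nn s μ (p s) n i)) s) :
    (∑ n : Fin N, ∑ i : Fin d,
        (starRingEnd ℂ) (q 1 n i - Bop d N hN (starRingEnd ℂ μ) u n i) * v n i) =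
    (∑ n : Fin N, ∑ i : Fin d,
        (starRingEnd ℂ) (u n i) * (p 0 n i - BopT d N hN μ v n i)) := by
  have hconst : pairing (q 1) (p 1) = pairing (q 0) (p 0) :=
    pairing_eq_of_hasDerivAt_adjoint (X := fun s => Aop d h N hN Δ A nn s (conj μ))
      (Y := fun s => AopT d h N hN Δ A nn s μ) (pairing_Aop_conj hN Δ A nn · μ) zero_le_one
      hqode hpode
  rw [hq0, hp1] at hconst
  change pairing (q 1 - Bop d N hN (conj μ) u) v = pairing u (p 0 - BopT d N hN μ v)
  rw [pairing_sub_left, pairing_sub_right, hconst, pairing_Bop_conj]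

/-- **Key identity in the proof of Theorem 4.1.** With `q' = A(s, conj μ) q`, `q(0) = u`
and `p' = -A(s,μ)ᵀ p`, `p(1) = v` on `[0,1]`, one has
`(q(1) - B(conj μ)u)* v = u* (p(0) - B(μ)ᵀ v)`, i.e. `M(μ) = N(conj μ)*`. -/
theorem transposed_charmatrix_identity
    (d h N : ℕ) (hd : 0 < d) (hN : 0 < N) (Δ : ℝ) (hΔ : 0 < Δ)
    (A : Fin (h+1) → ℝ → Matrix (Fin d) (Fin d) ℝ)
    (hA : ∀ j, Continuous (A j))
    (hper : ∀ j t, A j (t + (N : ℝ) * Δ) = A j t)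
    (nn : Fin (h+1) → ℕ) (hn0 : nn 0 = 0)
    (hmono : ∀ i j : Fin (h+1), 1 ≤ (i : ℕ) → i < j → nn i < nn j)
    (μ : ℂ) (hμ : μ ≠ 0)
    (u v : Fin N → Fin d → ℂ)
    (q p : ℝ → Fin N → Fin d → ℂ)
    (hq0 : q 0 = u)
    (hqode : ∀ s ∈ Set.Icc (0:ℝ) 1,
      HasDerivAt q (Aop d h N hN Δ A nn s (starRingEnd ℂ μ) (q s)) s)
    (hp1 : p 1 = v)
    (hpode : ∀ s ∈ Set.Icc (0:ℝ) 1,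
      HasDerivAt p (fun n i => -(AopT d h N hN Δ A nn s μ (p s) n i)) s) :
    (∑ n : Fin N, ∑ i : Fin d,
        (starRingEnd ℂ) (q 1 n i - Bop d N hN (starRingEnd ℂ μ) u n i) * v n i) =
    (∑ n : Fin N, ∑ i : Fin d,
        (starRingEnd ℂ) (u n i) * (p 0 n i - BopT d N hN μ v n i)) :=
  transposed_charmatrix_identity_general d h N hN Δ A nn μ u v q p hq0 hqode hp1 hpode
end
end

section
/- Let μ ∈ ℂ with μ ≠ 0 and let u ∈ (ℂ^d)^N with u ≠ 0. The following are equivalent: (i) u is a left eigenvector of the characteristic matrix at μ, i.e., for every v ∈ (ℂ^d)^N and every differentiable q : [0,1] → (ℂ^d)^N with q'(s) = A(s, μ)q(s) on [0,1] and q(0) = v, one has u* (q(1) − B(μ)v) = 0 (u* denoting conjugate transpose); (ii) u is a right eigenvector of the transposed problem at conj(μ), i.e., there exists a differentiable p : [0,1] → (ℂ^d)^N with p'(s) = −A(s, conj(μ))ᵀ p(s) on [0,1], p(1) = u, and p(0) = B(conj(μ))ᵀ u. (Theorem 4.1: characterization of left eigenvectors of the characteristic matrix.) -/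
open scoped BigOperators

noncomputable section

/-!
For `q' = A(s,μ) q` and `p' = -A(s, conj μ)ᵀ p` the pairing `Σ conj(p(s)) q(s)` is constant in `s`,
because `A(s, conj μ)ᵀ` is the adjoint of `A(s,μ)` for this pairing; likewise `B(conj μ)ᵀ` is the
adjoint of `B(μ)`. With `p(1) = u` this turns `u* (q(1) - B(μ)v)` into `(p(0) - B(conj μ)ᵀ u)* v`,
which vanishes for all `v` exactly when `p(0) = B(conj μ)ᵀ u`. It remains to know that both linear
equations can be solved on all of `[0,1]` from any initial value: Picard–Lindelöf applies to the
field truncated outside a large ball, and a Grönwall bound shows the solution never leaves it.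
-/

open Set
open scoped NNReal

section LinearODE

variable {E : Type*} [NormedAddCommGroup E] [NormedSpace ℝ E]

def ballRetraction (R : ℝ) (x : E) : E := (R / max R ‖x‖) • x

lemma norm_ballRetraction_le (R : ℝ) (x : E) (hR : 0 < R) : ‖ballRetraction R x‖ ≤ R := by
  have hmax : 0 < max R ‖x‖ := lt_max_of_lt_left hR
  rw [ballRetraction, norm_smul, Real.norm_of_nonneg (by positivity), div_mul_eq_mul_div,
    div_le_iff₀ hmax]
  exact mul_le_mul_of_nonneg_left (le_max_right _ _) hR.le

lemma norm_ballRetraction_le_norm (R : ℝ) (x : E) (hR : 0 < R) :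
    ‖ballRetraction R x‖ ≤ ‖x‖ := by
  have hmax : 0 < max R ‖x‖ := lt_max_of_lt_left hR
  rw [ballRetraction, norm_smul, Real.norm_of_nonneg (by positivity)]
  exact mul_le_of_le_one_left (norm_nonneg x) (div_le_one_of_le₀ (le_max_left _ _) hmax.le)

lemma ballRetraction_of_norm_le {R : ℝ} {x : E} (hx : ‖x‖ ≤ R) : ballRetraction R x = x := by
  rcases (norm_nonneg x).trans hx |>.eq_or_lt with hR | hR
  · rw [← hR, norm_le_zero_iff] at hx
    simp [ballRetraction, hx]
  · rw [ballRetraction, max_eq_left hx, div_self hR.ne', one_smul]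

lemma lipschitzWith_ballRetraction {R : ℝ} (hR : 0 < R) :
    LipschitzWith 2 (ballRetraction (E := E) R) := by
  refine LipschitzWith.of_dist_le_mul fun x y => ?_
  set a := max R ‖x‖
  set b := max R ‖y‖
  have ha : 0 < a := lt_max_of_lt_left hR
  have hb : 0 < b := lt_max_of_lt_left hR
  have hab : |b - a| ≤ ‖x - y‖ := by
    have hmax := abs_max_sub_max_le_abs ‖y‖ ‖x‖ R
    rw [max_comm ‖y‖, max_comm ‖x‖] at hmax
    calc |b - a| ≤ |‖y‖ - ‖x‖| := hmax
      _ ≤ ‖x - y‖ := by rw [norm_sub_rev x y]; exact abs_norm_sub_norm_le y x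
  have hscale : ‖(R / a) • (x - y)‖ ≤ ‖x - y‖ := by
    rw [norm_smul, Real.norm_of_nonneg (by positivity)]
    exact mul_le_of_le_one_left (norm_nonneg _) (div_le_one_of_le₀ (le_max_left _ _) ha.le)
  have hshift : ‖(R / a - R / b) • y‖ ≤ ‖x - y‖ := by
    have h1 : R / a ≤ 1 := div_le_one_of_le₀ (le_max_left _ _) ha.le
    have h2 : ‖y‖ / b ≤ 1 := div_le_one_of_le₀ (le_max_right _ _) hb.le
    have hid : ‖(R / a - R / b) • y‖ = R / a * |b - a| * (‖y‖ / b) := by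
      rw [norm_smul, Real.norm_eq_abs, show R / a - R / b = R / a * (b - a) / b by field_simp,
        abs_div, abs_mul, abs_of_pos hb, abs_of_pos (by positivity : 0 < R / a)]
      ring
    rw [hid]
    calc R / a * |b - a| * (‖y‖ / b) ≤ 1 * |b - a| * 1 := by gcongr
      _ ≤ ‖x - y‖ := by linarith
  rw [dist_eq_norm, dist_eq_norm, ballRetraction, ballRetraction,
    show (R / a) • x - (R / b) • y = (R / a) • (x - y) + (R / a - R / b) • y by
      rw [smul_sub, sub_smul]; abel]
  calc _ ≤ ‖(R / a) • (x - y)‖ + ‖(R / a - R / b) • y‖ := norm_add_le _ _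
    _ ≤ 2 * ‖x - y‖ := by linarith
    _ = _ := by norm_num

lemma norm_le_mul_exp_of_hasDerivWithinAt_Icc_left {f f' : ℝ → E} {K a b : ℝ}
    (hf : ∀ t ∈ Icc a b, HasDerivWithinAt f (f' t) (Icc a b) t)
    (bound : ∀ t ∈ Icc a b, ‖f' t‖ ≤ K * ‖f t‖) (hK : 0 ≤ K) :
    ∀ t ∈ Icc a b, ‖f t‖ ≤ ‖f a‖ * Real.exp (K * (b - a)) := by
  intro t ht
  have hgron := norm_le_gronwallBound_of_norm_deriv_right_le
    (fun t ht => (hf t ht).continuousWithinAt)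
    (fun t ht => (hf t (Ico_subset_Icc_self ht)).mono_of_mem_nhdsWithin
      (Icc_mem_nhdsGE_of_mem ht))
    le_rfl (ε := 0) (fun t ht => (add_zero (K * ‖f t‖)).symm ▸ bound t (Ico_subset_Icc_self ht))
    t ht
  rw [gronwallBound_ε0] at hgron
  exact hgron.trans (by gcongr; exact ht.2)

lemma norm_le_mul_exp_of_hasDerivWithinAt_Icc {f f' : ℝ → E} {K a b t₀ : ℝ}
    (hf : ∀ t ∈ Icc a b, HasDerivWithinAt f (f' t) (Icc a b) t)
    (bound : ∀ t ∈ Icc a b, ‖f' t‖ ≤ K * ‖f t‖) (hK : 0 ≤ K) (ht₀ : t₀ ∈ Icc a b) :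
    ∀ t ∈ Icc a b, ‖f t‖ ≤ ‖f t₀‖ * Real.exp (K * (b - a)) := by
  intro t ht
  rcases le_total t₀ t with htt₀ | htt₀
  · have hsub : Icc t₀ b ⊆ Icc a b := Icc_subset_Icc_left ht₀.1
    calc ‖f t‖ ≤ ‖f t₀‖ * Real.exp (K * (b - t₀)) :=
          norm_le_mul_exp_of_hasDerivWithinAt_Icc_left
            (fun s hs => (hf s (hsub hs)).mono hsub) (fun s hs => bound s (hsub hs)) hK
            t ⟨htt₀, ht.2⟩
      _ ≤ _ := by gcongr; exact ht₀.1
  · -- time reversal turns the backward estimate into a forward one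
    have hsub : Icc a t₀ ⊆ Icc a b := Icc_subset_Icc_right ht₀.2
    have hneg : MapsTo Neg.neg (Icc (-t₀) (-a)) (Icc a t₀) := fun s hs =>
      ⟨le_neg.mp hs.2, neg_le.mp hs.1⟩
    have hrev := norm_le_mul_exp_of_hasDerivWithinAt_Icc_left (f := fun s => f (-s))
      (f' := fun s => -f' (-s)) (K := K)
      (fun s hs => by
        simpa [Function.comp_def] using
          ((hf _ (hsub (hneg hs))).mono hsub).scomp s (hasDerivWithinAt_neg ..) hneg)
      (fun s hs => by simpa using bound _ (hsub (hneg hs))) hK (-t)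
      ⟨neg_le_neg htt₀, neg_le_neg ht.1⟩
    simp only [neg_neg] at hrev
    calc ‖f t‖ ≤ ‖f t₀‖ * Real.exp (K * (t₀ - a)) := by rwa [← neg_sub_neg]
      _ ≤ _ := by gcongr; exact ht₀.2

theorem exists_forall_mem_Icc_hasDerivWithinAt_of_continuousOn_clm [CompleteSpace E]
    {T : ℝ → E →L[ℝ] E} {a b t₀ : ℝ} (hT : ContinuousOn T (Icc a b)) (ht₀ : t₀ ∈ Icc a b)
    (x₀ : E) :
    ∃ f : ℝ → E, f t₀ = x₀ ∧ ∀ t ∈ Icc a b, HasDerivWithinAt f (T t (f t)) (Icc a b) t := by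
  obtain ⟨C, hC⟩ := isCompact_Icc.exists_bound_of_continuousOn hT
  obtain ⟨K, hTK⟩ : ∃ K : ℝ≥0, ∀ t ∈ Icc a b, ‖T t‖₊ ≤ K := ⟨C.toNNReal, fun t ht => by
    rw [← NNReal.coe_le_coe, coe_nnnorm]; exact (hC t ht).trans (Real.le_coe_toNNReal C)⟩
  -- the solution will stay in the ball of radius `R`, so truncating the field there is harmless
  set R := (‖x₀‖ + 1) * Real.exp (K * (b - a))
  have hR : 0 < R := by positivity
  have hbound : ∀ t ∈ Icc a b, ∀ x, ‖T t (ballRetraction R x)‖ ≤ K * R := fun t ht x =>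
    (T t).le_of_opNorm_le_of_le (hTK t ht) (norm_ballRetraction_le R x hR)
  have hpl : IsPicardLindelof (fun t x => T t (ballRetraction R x)) ⟨t₀, ht₀⟩ x₀
      (K * R * (b - a)).toNNReal 0 (K * R).toNNReal (K * 2) := {
    lipschitzOnWith := fun t ht => (((T t).lipschitz.comp (lipschitzWith_ballRetraction hR)).weaken
      (mul_le_mul_left (hTK t ht) 2)).lipschitzOnWith,
    continuousOn := fun x _ => hT.clm_apply continuousOn_const
    norm_le := fun t ht x _ => (hbound t ht x).trans (Real.le_coe_toNNReal _),
    mul_max_le := by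
      have hab : 0 ≤ b - a := sub_nonneg.2 (ht₀.1.trans ht₀.2)
      rw [Real.coe_toNNReal (K * R) (by positivity),
        Real.coe_toNNReal (K * R * (b - a)) (by positivity), NNReal.coe_zero, sub_zero]
      exact mul_le_mul_of_nonneg_left (max_le (by linarith [ht₀.1] : b - t₀ ≤ b - a)
        (by linarith [ht₀.2] : t₀ - a ≤ b - a)) (by positivity) }
  obtain ⟨f, hf₀, hf⟩ := hpl.exists_eq_forall_mem_Icc_hasDerivWithinAt₀
  have hfR : ∀ t ∈ Icc a b, ‖f t‖ ≤ R := fun t ht => by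
    refine (norm_le_mul_exp_of_hasDerivWithinAt_Icc hf (fun s hs => ?_) K.2 ht₀ t ht).trans ?_
    · exact (T s).le_of_opNorm_le_of_le (hTK s hs) (norm_ballRetraction_le_norm R _ hR)
    · rw [show f t₀ = x₀ from hf₀]
      exact mul_le_mul_of_nonneg_right (by linarith) (Real.exp_pos _).le
  exact ⟨f, hf₀, fun t ht => by simpa only [ballRetraction_of_norm_le (hfR t ht)] using hf t ht⟩

theorem exists_forall_mem_Icc_hasDerivAt_of_isLinearMap [FiniteDimensional ℝ E]
    {v : ℝ → E → E} (hlin : ∀ t, IsLinearMap ℝ (v t)) (hcont : ∀ x, Continuous (v · x))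
    {a b t₀ : ℝ} (ht₀ : t₀ ∈ Icc a b) (x₀ : E) :
    ∃ f : ℝ → E, f t₀ = x₀ ∧ ∀ t ∈ Icc a b, HasDerivAt f (v t (f t)) t := by
  have := FiniteDimensional.complete ℝ E
  let T (t : ℝ) : E →L[ℝ] E := LinearMap.toContinuousLinearMap (hlin t).mk'
  have hT : Continuous T := continuous_clm_apply.2 hcont
  have ht₀' : t₀ ∈ Icc (a - 1) (b + 1) := ⟨by linarith [ht₀.1], by linarith [ht₀.2]⟩
  obtain ⟨f, hf₀, hf⟩ :=
    exists_forall_mem_Icc_hasDerivWithinAt_of_continuousOn_clm hT.continuousOn ht₀' x₀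
  refine ⟨f, hf₀, fun t ht => ?_⟩
  exact (hf t ⟨by linarith [ht.1], by linarith [ht.2]⟩).hasDerivAt
    (Icc_mem_nhds (by linarith [ht.1]) (by linarith [ht.2]))

end LinearODE

section BlockDot

variable {ι κ : Type*} [Fintype ι] [Fintype κ]

def blockDot (u v : ι → κ → ℂ) : ℂ := ∑ n, ∑ i, starRingEnd ℂ (u n i) * v n i

lemma blockDot_neg_left (u v : ι → κ → ℂ) : blockDot (-u) v = -blockDot u v := by
  simp [blockDot]

lemma blockDot_sub_right (u v w : ι → κ → ℂ) :
    blockDot u (v - w) = blockDot u v - blockDot u w := by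
  simp [blockDot, mul_sub]

lemma blockDot_single [DecidableEq ι] [DecidableEq κ] (x : ι → κ → ℂ) (m : ι) (i : κ) :
    blockDot x (Pi.single m (Pi.single i 1)) = starRingEnd ℂ (x m i) := by
  simp [blockDot, Pi.single_apply, ite_apply, mul_ite]

lemma ext_blockDot_right {x y : ι → κ → ℂ} (h : ∀ v, blockDot x v = blockDot y v) : x = y := by
  classical
  ext m i
  simpa [blockDot_single] using
    (starRingEnd ℂ).injective.eq_iff.2 (h (Pi.single m (Pi.single i 1)))

lemma HasDerivAt.blockDot {p q : ℝ → ι → κ → ℂ} {p' q' : ι → κ → ℂ} {s : ℝ}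
    (hp : HasDerivAt p p' s) (hq : HasDerivAt q q' s) :
    HasDerivAt (fun t => _root_.blockDot (p t) (q t))
      (_root_.blockDot p' (q s) + _root_.blockDot (p s) q') s := by
  simp only [_root_.blockDot, ← Finset.sum_add_distrib]
  refine HasDerivAt.fun_sum fun n _ => HasDerivAt.fun_sum fun i _ => ?_
  have hpni := hasDerivAt_pi.1 (hasDerivAt_pi.1 hp n) i
  have hqni := hasDerivAt_pi.1 (hasDerivAt_pi.1 hq n) i
  simpa only [starRingEnd_apply] using hpni.star.fun_mul hqni

theorem blockDot_eq_of_hasDerivAt_of_adjoint {P Q : ℝ → (ι → κ → ℂ) → ι → κ → ℂ}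
    {p q : ℝ → ι → κ → ℂ} {a b : ℝ}
    (hPQ : ∀ s ∈ Icc a b, ∀ x y, blockDot (P s x) y = blockDot x (Q s y))
    (hp : ∀ s ∈ Icc a b, HasDerivAt p (-P s (p s)) s)
    (hq : ∀ s ∈ Icc a b, HasDerivAt q (Q s (q s)) s) :
    ∀ t ∈ Icc a b, blockDot (p t) (q t) = blockDot (p a) (q a) := by
  have hderiv : ∀ s ∈ Icc a b, HasDerivAt (fun t => blockDot (p t) (q t)) 0 s := fun s hs => by
    simpa [blockDot_neg_left, hPQ s hs] using (hp s hs).blockDot (hq s hs)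
  exact constant_of_has_deriv_right_zero
    (fun s hs => (hderiv s hs).continuousAt.continuousWithinAt)
    (fun s hs => (hderiv s (Ico_subset_Icc_self hs)).hasDerivWithinAt)

end BlockDot

section CharacteristicMatrix

variable {d h N : ℕ} (hN : 0 < N) (Δ : ℝ) (A : Fin (h+1) → ℝ → Matrix (Fin d) (Fin d) ℝ)
  (nn : Fin (h+1) → ℕ)

lemma isLinearMap_Aop (s : ℝ) (μ : ℂ) : IsLinearMap ℝ (Aop d h N hN Δ A nn s μ) where
  map_add x y := by ext n i; simp [Aop, mul_add, Finset.sum_add_distrib]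
  map_smul c x := by ext n i; simp [Aop, Finset.mul_sum, mul_left_comm]

lemma isLinearMap_AopT (s : ℝ) (μ : ℂ) : IsLinearMap ℝ (AopT d h N hN Δ A nn s μ) where
  map_add x y := by
    ext n i
    simp only [AopT, Pi.add_apply, mul_add, Finset.sum_add_distrib, ite_add_zero]
  map_smul c x := by ext n i; simp [AopT, Finset.mul_sum, mul_ite, mul_left_comm]

lemma continuous_Aop_apply (hA : ∀ j, Continuous (A j)) (μ : ℂ) (x : Fin N → Fin d → ℂ) :
    Continuous fun s => Aop d h N hN Δ A nn s μ x := by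
  unfold Aop
  fun_prop

lemma continuous_AopT_apply (hA : ∀ j, Continuous (A j)) (μ : ℂ) (x : Fin N → Fin d → ℂ) :
    Continuous fun s => AopT d h N hN Δ A nn s μ x := by
  refine continuous_pi fun n => continuous_pi fun i => continuous_const.mul <|
    continuous_finsetSum _ fun m _ => continuous_finsetSum _ fun j _ => ?_
  split_ifs <;> fun_prop

lemma blockDot_AopT (s : ℝ) (μ : ℂ) (p q : Fin N → Fin d → ℂ) :
    blockDot (AopT d h N hN Δ A nn s (starRingEnd ℂ μ) p) q
      = blockDot p (Aop d h N hN Δ A nn s μ q) := by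
  simp only [blockDot, AopT, Aop, map_mul, map_sum, apply_ite (starRingEnd ℂ), map_zero,
    Complex.conj_ofReal, map_zpow₀, Complex.conj_conj, Finset.mul_sum, Finset.sum_mul, mul_ite,
    ite_mul, mul_zero, zero_mul]
  -- move the sum over the block index `n` innermost, where the indicator collapses it
  conv_lhs => enter [2, n]; rw [Finset.sum_comm]
  conv_lhs => enter [2, n, 2, m]; rw [Finset.sum_comm]
  rw [Finset.sum_comm]
  conv_lhs => enter [2, m]; rw [Finset.sum_comm]
  conv_lhs => enter [2, m, 2, j]; rw [Finset.sum_comm]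
  simp only [Finset.sum_ite_eq', Finset.mem_univ, if_true]
  conv_lhs => enter [2, m, 2, j]; rw [Finset.sum_comm]
  conv_lhs => enter [2, m]; rw [Finset.sum_comm]
  refine Finset.sum_congr rfl fun m _ => Finset.sum_congr rfl fun i' _ =>
    Finset.sum_congr rfl fun j _ => Finset.sum_congr rfl fun i _ => ?_
  ring

lemma blockDot_Bop (μ : ℂ) (u v : Fin N → Fin d → ℂ) :
    blockDot u (Bop d N hN μ v) = blockDot (BopT d N hN (starRingEnd ℂ μ) u) v := by
  obtain ⟨M, rfl⟩ : ∃ M, N = M + 1 := ⟨N - 1, by omega⟩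
  -- `B(μ)` shifts the block index by one, cyclically
  refine Fintype.sum_equiv (finRotate (M + 1)) _ _ fun ⟨k, hk⟩ =>
    Finset.sum_congr rfl fun i _ => ?_
  rcases Nat.lt_succ_iff_lt_or_eq.1 hk with hkM | rfl
  · rw [finRotate_of_lt hkM]
    simp [Bop, BopT, hkM]
  · rw [finRotate_last']
    simp [Bop, BopT]
    ring

end CharacteristicMatrix

theorem left_eigenvector_characterization_general
    (d h N : ℕ) (hN : 0 < N) (Δ : ℝ)
    (A : Fin (h+1) → ℝ → Matrix (Fin d) (Fin d) ℝ)
    (hA : ∀ j, Continuous (A j))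
    (nn : Fin (h+1) → ℕ)
    (μ : ℂ)
    (u : Fin N → Fin d → ℂ) :
    (∀ v : Fin N → Fin d → ℂ, ∀ q : ℝ → Fin N → Fin d → ℂ, q 0 = v →
      (∀ s ∈ Set.Icc (0:ℝ) 1, HasDerivAt q (Aop d h N hN Δ A nn s μ (q s)) s) →
      (∑ n : Fin N, ∑ i : Fin d,
        (starRingEnd ℂ) (u n i) * (q 1 n i - Bop d N hN μ v n i)) = 0) ↔
    (∃ p : ℝ → Fin N → Fin d → ℂ,
      (∀ s ∈ Set.Icc (0:ℝ) 1,
        HasDerivAt p (fun n i => -(AopT d h N hN Δ A nn s (starRingEnd ℂ μ) (p s) n i)) s) ∧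
      p 1 = u ∧ p 0 = BopT d N hN (starRingEnd ℂ μ) u) := by
  have hpairing : ∀ p q : ℝ → Fin N → Fin d → ℂ,
      (∀ s ∈ Icc (0:ℝ) 1, HasDerivAt p (-AopT d h N hN Δ A nn s (starRingEnd ℂ μ) (p s)) s) →
      (∀ s ∈ Icc (0:ℝ) 1, HasDerivAt q (Aop d h N hN Δ A nn s μ (q s)) s) →
      blockDot (p 1) (q 1) = blockDot (p 0) (q 0) := fun p q hp hq =>
    blockDot_eq_of_hasDerivAt_of_adjoint (fun s _ => blockDot_AopT hN Δ A nn s μ) hp hq 1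
      ⟨zero_le_one, le_rfl⟩
  constructor
  · intro H
    obtain ⟨p, hp1, hp⟩ := exists_forall_mem_Icc_hasDerivAt_of_isLinearMap
      (v := fun s x => -AopT d h N hN Δ A nn s (starRingEnd ℂ μ) x)
      (fun s => (-(isLinearMap_AopT hN Δ A nn s _).mk').isLinear)
      (fun x => (continuous_AopT_apply hN Δ A nn hA _ x).neg) ⟨zero_le_one, le_rfl⟩ u
    refine ⟨p, hp, hp1, ext_blockDot_right fun v => ?_⟩
    obtain ⟨q, hq0, hq⟩ := exists_forall_mem_Icc_hasDerivAt_of_isLinearMap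
      (isLinearMap_Aop hN Δ A nn · μ) (continuous_Aop_apply hN Δ A nn hA μ)
      ⟨le_rfl, zero_le_one⟩ v
    have hqB : blockDot u (q 1 - Bop d N hN μ v) = 0 := H v q hq0 hq
    calc blockDot (p 0) v = blockDot u (q 1) := by rw [← hp1, hpairing p q hp hq, hq0]
      _ = blockDot u (Bop d N hN μ v) := by rwa [blockDot_sub_right, sub_eq_zero] at hqB
      _ = blockDot (BopT d N hN (starRingEnd ℂ μ) u) v := blockDot_Bop hN μ u v
  · rintro ⟨p, hp, hp1, hp0⟩ v q hq0 hq
    change blockDot u (q 1 - Bop d N hN μ v) = 0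
    rw [blockDot_sub_right, blockDot_Bop, ← hp0, ← hq0, ← hpairing p q hp hq, hp1, sub_self]

/-- **Theorem 4.1.** For `μ ≠ 0` and `u ≠ 0`: `u` is a left eigenvector of the
characteristic matrix at `μ` (i.e. `u* N(μ)v = 0` for every `v`, with `N(μ)v = q(1) - B(μ)v`
computed from any solution of `q' = A(s,μ)q`, `q(0) = v`) if and only if `u` is a right
eigenvector of the transposed problem at `conj μ` (i.e. there is `p` with
`p' = -A(s, conj μ)ᵀ p` on `[0,1]`, `p(1) = u` and `p(0) = B(conj μ)ᵀ u`). -/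
theorem left_eigenvector_characterization
    (d h N : ℕ) (hd : 0 < d) (hN : 0 < N) (Δ : ℝ) (hΔ : 0 < Δ)
    (A : Fin (h+1) → ℝ → Matrix (Fin d) (Fin d) ℝ)
    (hA : ∀ j, Continuous (A j))
    (hper : ∀ j t, A j (t + (N : ℝ) * Δ) = A j t)
    (nn : Fin (h+1) → ℕ) (hn0 : nn 0 = 0)
    (hmono : ∀ i j : Fin (h+1), 1 ≤ (i : ℕ) → i < j → nn i < nn j)
    (μ : ℂ) (hμ : μ ≠ 0)
    (u : Fin N → Fin d → ℂ) (hu : u ≠ 0) :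
    (∀ v : Fin N → Fin d → ℂ, ∀ q : ℝ → Fin N → Fin d → ℂ, q 0 = v →
      (∀ s ∈ Set.Icc (0:ℝ) 1, HasDerivAt q (Aop d h N hN Δ A nn s μ (q s)) s) →
      (∑ n : Fin N, ∑ i : Fin d,
        (starRingEnd ℂ) (u n i) * (q 1 n i - Bop d N hN μ v n i)) = 0) ↔
    (∃ p : ℝ → Fin N → Fin d → ℂ,
      (∀ s ∈ Set.Icc (0:ℝ) 1,
        HasDerivAt p (fun n i => -(AopT d h N hN Δ A nn s (starRingEnd ℂ μ) (p s) n i)) s) ∧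
      p 1 = u ∧ p 0 = BopT d N hN (starRingEnd ℂ μ) u) :=
  left_eigenvector_characterization_general d h N hN Δ A hA nn μ u
end
end

section
/- Let p, m ≥ 1 be integers and let S ∈ ℂ^{m×(p+m)}. For c ∈ ℂ^{p+m}, let Bc ∈ ℂ^p be the vector of the first p coordinates of c and Ec ∈ ℂ^p the vector of the last p coordinates of c. Let P ∈ ℂ^{(p+m)×(p+m)} be the matrix whose first m rows are S and whose last p rows select the first p coordinates (i.e., Pc = (Sc, Bc)); assume P is invertible. Define U ∈ ℂ^{p×p} by U w = E(P^{−1} ι(w)), where ι(w) ∈ ℂ^{p+m} has its first m coordinates zero and its last p coordinates equal to w. Then for every μ ∈ ℂ with μ ≠ 0: there exists c ∈ ℂ^{p+m} with c ≠ 0, μ·(Sc) = 0 and μ·(Bc) = Ec, if and only if there exists w ∈ ℂ^p with w ≠ 0 and Uw = μw. (The nonzero eigenvalues of the generalized eigenvalue problem (3.13) coincide with the nonzero eigenvalues of the discretized monodromy matrix U_M = E [S; B]^{−1} Eᵀ, Section 3.1.) -/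
open scoped BigOperators
open Matrix

/-- **Section 3.1.** The nonzero eigenvalues of the generalized eigenvalue problem
(3.13), `μ Sc = 0`, `μ Bc = Ec` (with `Bc` the first `p` and `Ec` the last `p`
coordinates of `c ∈ ℂ^{p+m}`), coincide with the nonzero eigenvalues of the discretized
monodromy matrix `U = E [S; B]^{-1} ι`, where `[S; B] = P` is assumed invertible and
`ι(w)` has first `m` coordinates zero and last `p` coordinates `w`. -/
theorem discretized_monodromy_eigenvalues
    (p m : ℕ) (hp : 0 < p) (hm : 0 < m)
    (S : Matrix (Fin m) (Fin (p + m)) ℂ)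
    (P : Matrix (Fin m ⊕ Fin p) (Fin (p + m)) ℂ)
    (hPS : ∀ i : Fin m, P (Sum.inl i) = S i)
    (hPB : ∀ (i : Fin p) (j : Fin (p + m)),
      P (Sum.inr i) j = if (j : ℕ) = (i : ℕ) then 1 else 0)
    (Pinv : Matrix (Fin (p + m)) (Fin m ⊕ Fin p) ℂ)
    (hPinv1 : P * Pinv = 1) (hPinv2 : Pinv * P = 1)
    (μ : ℂ) (hμ : μ ≠ 0) :
    (∃ c : Fin (p + m) → ℂ, c ≠ 0 ∧
      μ • (S *ᵥ c) = 0 ∧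
      μ • (fun i : Fin p => c ⟨(i : ℕ), by have := i.isLt; omega⟩) =
        fun i : Fin p => c ⟨m + (i : ℕ), by have := i.isLt; omega⟩) ↔
    (∃ w : Fin p → ℂ, w ≠ 0 ∧
      (fun i : Fin p => (Pinv *ᵥ Sum.elim 0 w) ⟨m + (i : ℕ), by have := i.isLt; omega⟩) =
        μ • w) := by
  -- P applied to c : first components are S c, last are the first p coords of c
  have hPmul : ∀ c : Fin (p + m) → ℂ,
      P *ᵥ c = Sum.elim (S *ᵥ c)
        (fun i : Fin p => c ⟨(i : ℕ), by have := i.isLt; omega⟩) := by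
    intro c
    funext x
    cases x with
    | inl i => simp [mulVec, dotProduct, hPS]
    | inr i =>
        have hi : (i : ℕ) < p + m := by have := i.isLt; omega
        have hrow : ∀ j : Fin (p + m), P (Sum.inr i) j * c j =
            if j = (⟨(i : ℕ), hi⟩ : Fin (p + m)) then c j else 0 := by
          intro j
          rw [hPB]
          by_cases h : (j : ℕ) = (i : ℕ)
          · simp [h, Fin.ext_iff]
          · simp [h, Fin.ext_iff]
        simp only [mulVec, dotProduct, hrow, Sum.elim_inr]
        simp
  have hPinvP : ∀ c : Fin (p + m) → ℂ, Pinv *ᵥ (P *ᵥ c) = c := by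
    intro c
    rw [mulVec_mulVec, hPinv2, one_mulVec]
  have hPPinv : ∀ v : Fin m ⊕ Fin p → ℂ, P *ᵥ (Pinv *ᵥ v) = v := by
    intro v
    rw [mulVec_mulVec, hPinv1, one_mulVec]
  constructor
  · rintro ⟨c, hc, h1, h2⟩
    have hS : S *ᵥ c = 0 := by
      rcases smul_eq_zero.mp h1 with h | h
      · exact absurd h hμ
      · exact h
    set w : Fin p → ℂ := fun i : Fin p => c ⟨(i : ℕ), by have := i.isLt; omega⟩ with hw
    have hPc : P *ᵥ c = Sum.elim (0 : Fin m → ℂ) w := by rw [hPmul, hS]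
    refine ⟨w, ?_, ?_⟩
    · intro h0
      apply hc
      have : P *ᵥ c = 0 := by
        rw [hPc, h0]
        funext x; cases x <;> simp
      have := congrArg (fun v => Pinv *ᵥ v) this
      simpa [hPinvP c] using this
    · have hcc : Pinv *ᵥ Sum.elim 0 w = c := by rw [← hPc, hPinvP]
      rw [hcc, ← h2]
  · rintro ⟨w, hw, hU⟩
    set c : Fin (p + m) → ℂ := Pinv *ᵥ Sum.elim (0 : Fin m → ℂ) w with hc
    have hPc : P *ᵥ c = Sum.elim (0 : Fin m → ℂ) w := hPPinv _
    have hSc : S *ᵥ c = 0 := by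
      have := hPmul c
      rw [hPc] at this
      funext i
      have := congrFun this (Sum.inl i)
      simpa using this.symm
    have hBc : (fun i : Fin p => c ⟨(i : ℕ), by have := i.isLt; omega⟩) = w := by
      have := hPmul c
      rw [hPc] at this
      funext i
      have := congrFun this (Sum.inr i)
      simpa using this.symm
    refine ⟨c, ?_, ?_, ?_⟩
    · intro h0
      apply hw
      have : Sum.elim (0 : Fin m → ℂ) w = 0 := by
        rw [← hPc, h0, mulVec_zero]
      funext i
      have := congrFun this (Sum.inr i)
      simpa using this
    · rw [hSc, smul_zero]
    · rw [hBc, hU]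
end
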